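/- arXiv:0906.1389 — 8 statements merged into one kernel-verified Lean document; each statement's English description precedes it below -/
import Mathlib

section
/- Let L be a finite distributive lattice with rank function r, μ: L → ℝ≥0 a log-supermodular function (i.e., μ(x)μ(y) ≤ μ(x∧y)μ(x∨y) for all x,y), and g, h: L → ℝ≥0 both monotonely increasing. Define the polynomial E(k;q) = Σ_{x∈L} k(x) μ(x) q^{r(x)}. Then every coefficient of the polynomial E(1;q)·E(gh;q) − E(g;q)·E(h;q) is nonnegative. -/
/-!
The coefficient of `q ^ d` on either side is a sum over the pairs `(x, y)` with `r x + r y = d`.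
Since `r x + r y = r (x ⊓ y) + r (x ⊔ y)`, it suffices to compare the two sums over the pairs with
a fixed meet `a` and join `b`. These pairs of complements in `[a, b]` form a sublattice of
`L × Lᵒᵈ`, on which `ν (x, y) = μ x * μ y` is log-supermodular and the swap `(x, y) ↦ (y, x)` is an
antitone involution preserving `ν`. There, by the four functions theorem and then FKG,
`(∑ ν g(x) h(y)) (∑ ν) ≤ (∑ ν h(y)) (∑ ν g(x)) = (∑ ν h(x)) (∑ ν g(x)) ≤ (∑ ν) (∑ ν g(x) h(x))`,
and swapping back turns the right-hand sum into `∑ μ x g(y) h(y) μ y`.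
-/

open Finset OrderDual Polynomial

section FKG
variable {α β : Type*} [DistribLattice α] [Fintype α] [CommSemiring β] [LinearOrder β]
  [IsStrictOrderedRing β] [ExistsAddOfLE β]

theorem fkg_monotone_antitone (μ f k : α → β) (hμ₀ : 0 ≤ μ) (hf₀ : 0 ≤ f) (hk₀ : 0 ≤ k)
    (hf : Monotone f) (hk : Antitone k) (hμ : ∀ a b, μ a * μ b ≤ μ (a ⊓ b) * μ (a ⊔ b)) :
    (∑ a, μ a * (f a * k a)) * ∑ a, μ a ≤ (∑ a, μ a * k a) * ∑ a, μ a * f a := by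
  refine four_functions_theorem_univ (fun a ↦ μ a * (f a * k a)) μ (fun a ↦ μ a * k a)
    (fun a ↦ μ a * f a) (fun a ↦ mul_nonneg (hμ₀ a) (mul_nonneg (hf₀ a) (hk₀ a))) hμ₀
    (fun a ↦ mul_nonneg (hμ₀ a) (hk₀ a)) (fun a ↦ mul_nonneg (hμ₀ a) (hf₀ a)) fun a b ↦ ?_
  calc μ a * (f a * k a) * μ b = μ a * μ b * (f a * k a) := by ring
    _ ≤ μ (a ⊓ b) * μ (a ⊔ b) * (f (a ⊔ b) * k (a ⊓ b)) :=
      mul_le_mul (hμ a b) (mul_le_mul (hf le_sup_left) (hk inf_le_left) (hk₀ a) (hf₀ _))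
        (mul_nonneg (hf₀ a) (hk₀ a)) (mul_nonneg (hμ₀ _) (hμ₀ _))
    _ = μ (a ⊓ b) * k (a ⊓ b) * (μ (a ⊔ b) * f (a ⊔ b)) := by ring

theorem fkg_comp_antitone_involutive (ν f g : α → β) {σ : α → α} (hσ : Function.Involutive σ)
    (hσ' : Antitone σ) (hνσ : ∀ a, ν (σ a) = ν a) (hν₀ : 0 ≤ ν) (hf₀ : 0 ≤ f) (hg₀ : 0 ≤ g)
    (hf : Monotone f) (hg : Monotone g) (hν : ∀ a b, ν a * ν b ≤ ν (a ⊓ b) * ν (a ⊔ b)) :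
    ∑ a, ν a * (f a * g (σ a)) ≤ ∑ a, ν a * (f a * g a) := by
  have hgσ : ∑ a, ν a * g (σ a) = ∑ a, ν a * g a := by
    simpa only [Function.Involutive.coe_toPerm, hνσ] using
      Equiv.sum_comp (hσ.toPerm σ) fun a ↦ ν a * g a
  obtain hzero | hpos := (sum_nonneg fun a _ ↦ hν₀ a).eq_or_lt
  · have : ν = 0 := (Fintype.sum_eq_zero_iff_of_nonneg hν₀).1 hzero.symm
    simp [this]
  refine le_of_mul_le_mul_right ?_ hpos
  calc (∑ a, ν a * (f a * g (σ a))) * ∑ a, ν a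
      ≤ (∑ a, ν a * g (σ a)) * ∑ a, ν a * f a :=
        fkg_monotone_antitone ν f (g ∘ σ) hν₀ hf₀ (fun a ↦ hg₀ (σ a)) hf
          (hg.comp_antitone hσ') hν
    _ = (∑ a, ν a * f a) * ∑ a, ν a * g a := by rw [hgσ, mul_comm]
    _ ≤ (∑ a, ν a) * ∑ a, ν a * (f a * g a) := fkg f g ν hν₀ hf₀ hg₀ hf hg hν
    _ = (∑ a, ν a * (f a * g a)) * ∑ a, ν a := mul_comm _ _

end FKG

section ComplementPairs
variable {α : Type*} [DistribLattice α]

theorem sup_inf_inf_eq_of_inf_eq_of_sup_eq {a b x y z w : α} (hxy : x ⊓ y = a) (hxy' : x ⊔ y = b)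
    (hzw : z ⊓ w = a) (hzw' : z ⊔ w = b) : (x ⊔ z) ⊓ (y ⊓ w) = a ∧ (x ⊔ z) ⊔ (y ⊓ w) = b := by
  constructor
  · calc (x ⊔ z) ⊓ (y ⊓ w) = (x ⊓ y) ⊓ w ⊔ (z ⊓ w) ⊓ y := by
          rw [inf_sup_right]; ac_rfl
      _ = a := by rw [hxy, hzw, inf_eq_left.2 (hzw ▸ inf_le_right),
          inf_eq_left.2 (hxy ▸ inf_le_right), sup_idem]
  · calc (x ⊔ z) ⊔ (y ⊓ w) = (x ⊔ y ⊔ z) ⊓ (z ⊔ w ⊔ x) := by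
          rw [sup_inf_left]; ac_rfl
      _ = b := by rw [hxy', hzw', sup_eq_left.2 (hzw' ▸ le_sup_left),
          sup_eq_left.2 (hxy' ▸ le_sup_left), inf_idem]

def complementPairs (a b : α) : Sublattice (α × αᵒᵈ) where
  carrier := {p | p.1 ⊓ ofDual p.2 = a ∧ p.1 ⊔ ofDual p.2 = b}
  supClosed' p hp q hq := sup_inf_inf_eq_of_inf_eq_of_sup_eq hp.1 hp.2 hq.1 hq.2
  infClosed' p hp q hq := by
    have := sup_inf_inf_eq_of_inf_eq_of_sup_eq (α := αᵒᵈ) hp.2 hp.1 hq.2 hq.1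
    exact ⟨this.2, this.1⟩

theorem mem_complementPairs {a b : α} {p : α × αᵒᵈ} :
    p ∈ complementPairs a b ↔ p.1 ⊓ ofDual p.2 = a ∧ p.1 ⊔ ofDual p.2 = b := Iff.rfl

instance [DecidableEq α] (a b : α) : DecidablePred (· ∈ complementPairs a b) :=
  fun _ ↦ decidable_of_iff' _ mem_complementPairs

def complementPairs.swap {a b : α} (p : complementPairs a b) : complementPairs a b :=
  ⟨(ofDual p.1.2, toDual p.1.1), by
    obtain ⟨h₁, h₂⟩ := p.2
    exact ⟨by simpa [inf_comm] using h₁, by simpa [sup_comm] using h₂⟩⟩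

theorem complementPairs.swap_involutive {a b : α} :
    Function.Involutive (complementPairs.swap (a := a) (b := b)) := fun _ ↦ rfl

theorem complementPairs.swap_antitone {a b : α} :
    Antitone (complementPairs.swap (a := a) (b := b)) := by
  intro p q hpq
  exact ⟨hpq.2, toDual_le_toDual.2 hpq.1⟩

end ComplementPairs

section PairSums
variable {α β : Type*} [DistribLattice α] [CommSemiring β] [LinearOrder β]
  [IsStrictOrderedRing β] [ExistsAddOfLE β]

theorem sum_complementPairs_le (μ g h : α → β) (hμ₀ : 0 ≤ μ) (hg₀ : 0 ≤ g) (hh₀ : 0 ≤ h)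
    (hμ : ∀ x y, μ x * μ y ≤ μ (x ⊓ y) * μ (x ⊔ y)) (hg : Monotone g) (hh : Monotone h)
    (a b : α) [Fintype (complementPairs a b)] :
    ∑ p : complementPairs a b, g p.1.1 * μ p.1.1 * (h (ofDual p.1.2) * μ (ofDual p.1.2)) ≤
      ∑ p : complementPairs a b,
        μ p.1.1 * (g (ofDual p.1.2) * h (ofDual p.1.2) * μ (ofDual p.1.2)) := by
  set ν : complementPairs a b → β := fun p ↦ μ p.1.1 * μ (ofDual p.1.2)
  have hν : ∀ p q, ν p * ν q ≤ ν (p ⊓ q) * ν (p ⊔ q) := fun p q ↦ by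
    calc ν p * ν q = μ p.1.1 * μ q.1.1 * (μ (ofDual p.1.2) * μ (ofDual q.1.2)) := by ring
      _ ≤ μ (p.1.1 ⊓ q.1.1) * μ (p.1.1 ⊔ q.1.1) *
          (μ (ofDual p.1.2 ⊓ ofDual q.1.2) * μ (ofDual p.1.2 ⊔ ofDual q.1.2)) :=
        mul_le_mul (hμ _ _) (hμ _ _) (mul_nonneg (hμ₀ _) (hμ₀ _))
          (mul_nonneg (hμ₀ _) (hμ₀ _))
      _ = ν (p ⊓ q) * ν (p ⊔ q) := by
        simp only [ν, Sublattice.coe_inf, Sublattice.coe_sup, Prod.fst_inf, Prod.snd_inf,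
          Prod.fst_sup, Prod.snd_sup, _root_.ofDual_inf, _root_.ofDual_sup]
        ring
  have hfkg := fkg_comp_antitone_involutive ν (fun p ↦ g p.1.1) (fun p ↦ h p.1.1)
    complementPairs.swap_involutive complementPairs.swap_antitone
    (fun p ↦ mul_comm _ _) (fun p ↦ mul_nonneg (hμ₀ _) (hμ₀ _)) (fun p ↦ hg₀ _)
    (fun p ↦ hh₀ _) (fun p q hpq ↦ hg hpq.1) (fun p q hpq ↦ hh hpq.1) hν
  have hswap := Equiv.sum_comp (complementPairs.swap_involutive.toPerm _)
    fun p ↦ ν p * (g p.1.1 * h p.1.1)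
  simp only [Function.Involutive.coe_toPerm] at hswap
  calc _ = ∑ p, ν p * (g p.1.1 * h (complementPairs.swap p).1.1) :=
        sum_congr rfl fun p _ ↦ by simp only [ν, complementPairs.swap]; ring
    _ ≤ ∑ p, ν p * (g p.1.1 * h p.1.1) := hfkg
    _ = _ := by
        rw [← hswap]
        exact sum_congr rfl fun p _ ↦ by simp only [ν, complementPairs.swap, ofDual_toDual]; ring

end PairSums

theorem sum_ite_add_eq_sum_complementPairs {α β : Type*} [DistribLattice α] [Fintype α]
    [DecidableEq α] [AddCommMonoid β] (r : α → ℕ)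
    (hr : ∀ x y, r x + r y = r (x ⊓ y) + r (x ⊔ y)) (d : ℕ) (Φ : α → α → β) :
    ∑ x, ∑ y, (if r x + r y = d then Φ x y else 0) =
      ∑ a, ∑ b, if r a + r b = d then ∑ p : complementPairs a b, Φ p.1.1 (ofDual p.1.2)
        else 0 := by
  set meetJoin : α × αᵒᵈ → α × α := fun p ↦ (p.1 ⊓ ofDual p.2, p.1 ⊔ ofDual p.2)
  have fiber (a b : α) : ∀ p, meetJoin p = (a, b) ↔ p ∈ complementPairs a b := by
    simp [meetJoin, mem_complementPairs]
  calc ∑ x, ∑ y, (if r x + r y = d then Φ x y else 0)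
      = ∑ p : α × αᵒᵈ, if r p.1 + r (ofDual p.2) = d then Φ p.1 (ofDual p.2) else 0 :=
        (Fintype.sum_prod_type' _).symm
    _ = ∑ j : α × α, ∑ p : {p // meetJoin p = j},
          if r p.1.1 + r (ofDual p.1.2) = d then Φ p.1.1 (ofDual p.1.2) else 0 :=
        (Fintype.sum_fiberwise meetJoin _).symm
    _ = ∑ j : α × α, if r j.1 + r j.2 = d then
          ∑ p : {p // meetJoin p = j}, Φ p.1.1 (ofDual p.1.2) else 0 := by
        refine sum_congr rfl fun j _ ↦ ?_
        have hrank : ∀ p : {p // meetJoin p = j},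
            r p.1.1 + r (ofDual p.1.2) = r j.1 + r j.2 := by
          rintro ⟨p, rfl⟩
          exact hr _ _
        simp only [hrank, sum_ite_irrel, sum_const_zero]
    _ = _ := by
        rw [Fintype.sum_prod_type]
        refine sum_congr rfl fun a _ ↦ sum_congr rfl fun b _ ↦ ?_
        exact if_congr Iff.rfl
          (Fintype.sum_equiv (Equiv.subtypeEquivRight (fiber a b)) _ _ fun _ ↦ rfl) rfl

theorem coeff_sum_mul_sum {ι κ R : Type*} [Fintype ι] [Fintype κ] [CommSemiring R]
    (r : ι → ℕ) (s : κ → ℕ) (F : ι → R) (G : κ → R) (d : ℕ) :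
    ((∑ x, C (F x) * X ^ r x) * ∑ y, C (G y) * X ^ s y).coeff d =
      ∑ x, ∑ y, if r x + s y = d then F x * G y else 0 := by
  simp only [sum_mul_sum, finsetSum_coeff]
  refine sum_congr rfl fun x _ ↦ sum_congr rfl fun y _ ↦ ?_
  rw [mul_mul_mul_comm, ← C_mul, ← pow_add, coeff_C_mul_X_pow]
  exact if_congr eq_comm rfl rfl

/-- q-FKG inequality: for a finite distributive lattice with rank function `r`
(satisfying the modular law), a log-supermodular weight `μ` and increasing
nonnegative functions `g, h`, the polynomial `E(1;q)·E(gh;q) − E(g;q)·E(h;q)`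
has nonnegative coefficients. -/
theorem stmt_0 {L : Type*} [DistribLattice L] [Fintype L]
    (r : L → ℕ) (hr : ∀ x y : L, r x + r y = r (x ⊓ y) + r (x ⊔ y))
    (μ g h : L → ℝ)
    (hμ0 : ∀ x, 0 ≤ μ x) (hg0 : ∀ x, 0 ≤ g x) (hh0 : ∀ x, 0 ≤ h x)
    (hμ : ∀ x y : L, μ x * μ y ≤ μ (x ⊓ y) * μ (x ⊔ y))
    (hg : Monotone g) (hh : Monotone h) :
    ∀ d : ℕ,
      ((∑ x : L, C (g x * μ x) * X ^ r x) * (∑ x : L, C (h x * μ x) * X ^ r x)).coeff d ≤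
      ((∑ x : L, C (μ x) * X ^ r x) *
        (∑ x : L, C (g x * h x * μ x) * X ^ r x)).coeff d := by
  classical
  intro d
  rw [coeff_sum_mul_sum, coeff_sum_mul_sum,
    sum_ite_add_eq_sum_complementPairs r hr d fun x y ↦ g x * μ x * (h y * μ y),
    sum_ite_add_eq_sum_complementPairs r hr d fun x y ↦ μ x * (g y * h y * μ y)]
  refine sum_le_sum fun a _ ↦ sum_le_sum fun b _ ↦ ?_
  split_ifs
  exacts [sum_complementPairs_le μ g h hμ0 hg0 hh0 hμ hg hh a b, le_rfl]
end

section
/- Let L be a finite distributive lattice, μ: L → ℝ≥0 log-supermodular, g: L → ℝ≥0 increasing and h: L → ℝ≥0 decreasing. Then E(1;q)·E(gh;q) ≪ E(g;q)·E(h;q) coefficientwise, i.e. for every d ≥ 0, the degree-d coefficient of E(1;q)·E(gh;q) is at most the degree-d coefficient of E(g;q)·E(h;q). -/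
open Polynomial Finset OrderDual
open scoped FinsetFamily

section Aux

variable {L : Type*} [DistribLattice L]

private lemma quad_sup {a b x y x' y' : L} (h1 : x ⊔ y = a) (h2 : x ⊓ y = b)
    (h3 : x' ⊔ y' = a) (h4 : x' ⊓ y' = b) :
    (x ⊔ x') ⊔ (y ⊓ y') = a ∧ (x ⊔ x') ⊓ (y ⊓ y') = b := by
  have hxa : x ≤ a := h1 ▸ le_sup_left
  have hx'a : x' ≤ a := h3 ▸ le_sup_left
  have hby : b ≤ y := h2 ▸ inf_le_right
  have hby' : b ≤ y' := h4 ▸ inf_le_right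
  constructor
  · calc (x ⊔ x') ⊔ (y ⊓ y') = ((x ⊔ x') ⊔ y) ⊓ ((x ⊔ x') ⊔ y') := sup_inf_left _ _ _
      _ = (a ⊔ x') ⊓ (x ⊔ a) := by rw [sup_right_comm, h1, sup_assoc, h3]
      _ = a := by rw [sup_comm a x', sup_eq_right.2 hx'a, sup_eq_right.2 hxa, inf_idem]
  · calc (x ⊔ x') ⊓ (y ⊓ y') = (x ⊓ (y ⊓ y')) ⊔ (x' ⊓ (y ⊓ y')) := inf_sup_right _ _ _
      _ = (b ⊓ y') ⊔ (y ⊓ b) := by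
          rw [← inf_assoc, h2, inf_comm y y', ← inf_assoc, h4, inf_comm b y]
      _ = b := by rw [inf_eq_left.2 hby', inf_eq_right.2 hby, sup_idem]

private lemma quad_inf {a b x y x' y' : L} (h1 : x ⊔ y = a) (h2 : x ⊓ y = b)
    (h3 : x' ⊔ y' = a) (h4 : x' ⊓ y' = b) :
    (x ⊓ x') ⊔ (y ⊔ y') = a ∧ (x ⊓ x') ⊓ (y ⊔ y') = b := by
  have h1' : y ⊔ x = a := by rw [sup_comm]; exact h1
  have h2' : y ⊓ x = b := by rw [inf_comm]; exact h2
  have h3' : y' ⊔ x' = a := by rw [sup_comm]; exact h3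
  have h4' : y' ⊓ x' = b := by rw [inf_comm]; exact h4
  obtain ⟨e1, e2⟩ := quad_sup h1' h2' h3' h4'
  constructor
  · rw [sup_comm]; exact e1
  · rw [inf_comm]; exact e2

variable [Fintype L]

/-- FKG-type inequality on a (finite) sublattice `F`, deduced from the four functions
theorem. -/
private lemma key {α : Type*} [DistribLattice α] [Fintype α] [DecidableEq α] (F : Finset α)
    (hFsup : ∀ p ∈ F, ∀ q ∈ F, p ⊔ q ∈ F) (hFinf : ∀ p ∈ F, ∀ q ∈ F, p ⊓ q ∈ F)
    (Φ U V : α → ℝ) (hΦ0 : ∀ x, 0 ≤ Φ x) (hU0 : ∀ x, 0 ≤ U x) (hV0 : ∀ x, 0 ≤ V x)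
    (hΦ : ∀ p q, Φ p * Φ q ≤ Φ (p ⊓ q) * Φ (p ⊔ q)) (hU : Monotone U) (hV : Monotone V) :
    (∑ q ∈ F, Φ q * U q) * (∑ q ∈ F, Φ q * V q) ≤
      (∑ q ∈ F, Φ q) * (∑ q ∈ F, Φ q * U q * V q) := by
  have hFsups : F ⊻ F = F := by
    ext c
    rw [mem_sups]
    constructor
    · rintro ⟨p, hp, q, hq, rfl⟩; exact hFsup p hp q hq
    · intro hc; exact ⟨c, hc, c, hc, sup_idem c⟩
  have hFinfs : F ⊼ F = F := by
    ext c
    rw [mem_infs]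
    constructor
    · rintro ⟨p, hp, q, hq, rfl⟩; exact hFinf p hp q hq
    · intro hc; exact ⟨c, hc, c, hc, inf_idem c⟩
  have n1 : ∀ q, 0 ≤ (if q ∈ F then Φ q * U q else 0) := fun q => by
    split
    exacts [mul_nonneg (hΦ0 q) (hU0 q), le_rfl]
  have n2 : ∀ q, 0 ≤ (if q ∈ F then Φ q * V q else 0) := fun q => by
    split
    exacts [mul_nonneg (hΦ0 q) (hV0 q), le_rfl]
  have n3 : ∀ q, 0 ≤ (if q ∈ F then Φ q else 0) := fun q => by
    split
    exacts [hΦ0 q, le_rfl]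
  have n4 : ∀ q, 0 ≤ (if q ∈ F then Φ q * U q * V q else 0) := fun q => by
    split
    exacts [mul_nonneg (mul_nonneg (hΦ0 q) (hU0 q)) (hV0 q), le_rfl]
  have h := four_functions_theorem
    (fun q => if q ∈ F then Φ q * U q else 0)
    (fun q => if q ∈ F then Φ q * V q else 0)
    (fun q => if q ∈ F then Φ q else 0)
    (fun q => if q ∈ F then Φ q * U q * V q else 0)
    n1 n2 n3 n4
    (fun p q => by
      by_cases hp : p ∈ F
      · by_cases hq : q ∈ F
        · rw [if_pos hp, if_pos hq, if_pos (hFinf p hp q hq), if_pos (hFsup p hp q hq)]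
          have hUm : U p ≤ U (p ⊔ q) := hU le_sup_left
          have hVm : V q ≤ V (p ⊔ q) := hV le_sup_right
          calc Φ p * U p * (Φ q * V q) = (Φ p * Φ q) * (U p * V q) := by ring
            _ ≤ (Φ (p ⊓ q) * Φ (p ⊔ q)) * (U (p ⊔ q) * V (p ⊔ q)) := by
                have h1 := hΦ p q
                have h2 : U p * V q ≤ U (p ⊔ q) * V (p ⊔ q) :=
                  mul_le_mul hUm hVm (hV0 q) (le_trans (hU0 p) hUm)
                have hnn : 0 ≤ Φ p * Φ q := mul_nonneg (hΦ0 p) (hΦ0 q)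
                have hnn2 : 0 ≤ U (p ⊔ q) * V (p ⊔ q) :=
                  mul_nonneg (hU0 _) (hV0 _)
                exact mul_le_mul h1 h2 (mul_nonneg (hU0 p) (hV0 q)) (mul_nonneg (hΦ0 _) (hΦ0 _))
            _ = Φ (p ⊓ q) * (Φ (p ⊔ q) * U (p ⊔ q) * V (p ⊔ q)) := by ring
        · rw [if_neg hq, mul_zero]
          exact mul_nonneg (n3 _) (n4 _)
      · rw [if_neg hp, zero_mul]
        exact mul_nonneg (n3 _) (n4 _))
    F F
  rw [hFsups, hFinfs] at h
  rw [Finset.sum_ite_of_true (fun q hq => hq), Finset.sum_ite_of_true (fun q hq => hq),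
    Finset.sum_ite_of_true (fun q hq => hq), Finset.sum_ite_of_true (fun q hq => hq)] at h
  exact h

/-- The fiber-wise inequality: on the set of pairs with prescribed join `a` and meet `b`. -/
private lemma fiber_le [DecidableEq L] (μ g h : L → ℝ)
    (hμ0 : ∀ x, 0 ≤ μ x) (hg0 : ∀ x, 0 ≤ g x) (hh0 : ∀ x, 0 ≤ h x)
    (hμ : ∀ x y : L, μ x * μ y ≤ μ (x ⊓ y) * μ (x ⊔ y))
    (hg : Monotone g) (hh : Antitone h) (a b : L)
    (F : Finset (L × Lᵒᵈ))
    (hF : ∀ q : L × Lᵒᵈ, q ∈ F ↔ (q.1 ⊔ ofDual q.2 = a ∧ q.1 ⊓ ofDual q.2 = b)) :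
    ∑ q ∈ F, μ q.1 * (g (ofDual q.2) * h (ofDual q.2) * μ (ofDual q.2)) ≤
      ∑ q ∈ F, (g q.1 * μ q.1) * (h (ofDual q.2) * μ (ofDual q.2)) := by
  -- swap reindexing
  have hswap : ∀ k : L → L → ℝ,
      ∑ q ∈ F, k q.1 (ofDual q.2) = ∑ q ∈ F, k (ofDual q.2) q.1 := by
    intro k
    refine Finset.sum_nbij' (i := fun q : L × Lᵒᵈ => (ofDual q.2, toDual q.1))
      (j := fun q : L × Lᵒᵈ => (ofDual q.2, toDual q.1)) ?_ ?_ ?_ ?_ ?_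
    · intro q hq
      rw [hF] at hq ⊢
      exact ⟨by rw [sup_comm]; exact hq.1, by rw [inf_comm]; exact hq.2⟩
    · intro q hq
      rw [hF] at hq ⊢
      exact ⟨by rw [sup_comm]; exact hq.1, by rw [inf_comm]; exact hq.2⟩
    · intro q _; rfl
    · intro q _; rfl
    · intro q _; rfl
  -- closure of F
  have hFsup : ∀ p ∈ F, ∀ q ∈ F, p ⊔ q ∈ F := by
    intro p hp q hq
    rw [hF] at hp hq ⊢
    have := quad_sup hp.1 hp.2 hq.1 hq.2
    simpa [Prod.fst_sup, Prod.snd_sup, _root_.ofDual_sup] using this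
  have hFinf : ∀ p ∈ F, ∀ q ∈ F, p ⊓ q ∈ F := by
    intro p hp q hq
    rw [hF] at hp hq ⊢
    have := quad_inf hp.1 hp.2 hq.1 hq.2
    simpa [Prod.fst_inf, Prod.snd_inf, _root_.ofDual_inf] using this
  -- the three functions
  set c : ℝ := ∑ x : L, g x with hc
  set c' : ℝ := ∑ x : L, h x with hc'
  have hcg : ∀ z : L, g z ≤ c := fun z =>
    Finset.single_le_sum (fun i _ => hg0 i) (mem_univ z)
  have hch : ∀ z : L, h z ≤ c' := fun z =>
    Finset.single_le_sum (fun i _ => hh0 i) (mem_univ z)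
  set Φ : L × Lᵒᵈ → ℝ := fun q => μ q.1 * μ (ofDual q.2) with hΦdef
  set U : L × Lᵒᵈ → ℝ := fun q => g q.1 - g (ofDual q.2) + c with hUdef
  set V : L × Lᵒᵈ → ℝ := fun q => h (ofDual q.2) - h q.1 + c' with hVdef
  have hΦ0 : ∀ q, 0 ≤ Φ q := fun q => mul_nonneg (hμ0 _) (hμ0 _)
  have hU0 : ∀ q, 0 ≤ U q := by
    intro q
    have h1 := hcg (ofDual q.2)
    have h2 := hg0 q.1
    simp only [hUdef]
    linarith
  have hV0 : ∀ q, 0 ≤ V q := by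
    intro q
    have h1 := hch q.1
    have h2 := hh0 (ofDual q.2)
    simp only [hVdef]
    linarith
  have hΦsm : ∀ p q : L × Lᵒᵈ, Φ p * Φ q ≤ Φ (p ⊓ q) * Φ (p ⊔ q) := by
    intro p q
    have h1 := hμ p.1 q.1
    have h2 := hμ (ofDual p.2) (ofDual q.2)
    simp only [hΦdef, Prod.fst_inf, Prod.snd_inf, Prod.fst_sup, Prod.snd_sup,
      _root_.ofDual_inf, _root_.ofDual_sup]
    calc μ p.1 * μ (ofDual p.2) * (μ q.1 * μ (ofDual q.2))
        = (μ p.1 * μ q.1) * (μ (ofDual p.2) * μ (ofDual q.2)) := by ring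
      _ ≤ (μ (p.1 ⊓ q.1) * μ (p.1 ⊔ q.1)) *
            (μ (ofDual p.2 ⊓ ofDual q.2) * μ (ofDual p.2 ⊔ ofDual q.2)) := by
          refine mul_le_mul h1 h2 (mul_nonneg (hμ0 _) (hμ0 _)) (mul_nonneg (hμ0 _) (hμ0 _))
      _ = μ (p.1 ⊓ q.1) * μ (ofDual p.2 ⊔ ofDual q.2) *
            (μ (p.1 ⊔ q.1) * μ (ofDual p.2 ⊓ ofDual q.2)) := by ring
  have hUmono : Monotone U := by
    intro p q hpq
    have h1 : p.1 ≤ q.1 := hpq.1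
    have h2 : ofDual q.2 ≤ ofDual p.2 := hpq.2
    have := hg h1
    have := hg h2
    simp only [hUdef]
    linarith
  have hVmono : Monotone V := by
    intro p q hpq
    have h1 : p.1 ≤ q.1 := hpq.1
    have h2 : ofDual q.2 ≤ ofDual p.2 := hpq.2
    have := hh h2
    have := hh h1
    simp only [hVdef]
    linarith
  have hkey := key F hFsup hFinf Φ U V hΦ0 hU0 hV0 hΦsm hUmono hVmono
  -- abbreviations
  set S : ℝ := ∑ q ∈ F, Φ q with hS
  set A : ℝ := ∑ q ∈ F, μ q.1 * (g (ofDual q.2) * h (ofDual q.2) * μ (ofDual q.2)) with hA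
  set B : ℝ := ∑ q ∈ F, (g q.1 * μ q.1) * (h (ofDual q.2) * μ (ofDual q.2)) with hB
  have hS0 : 0 ≤ S := Finset.sum_nonneg fun q _ => hΦ0 q
  -- linear sums vanish
  have hsum_u : ∑ q ∈ F, Φ q * (g q.1 - g (ofDual q.2)) = 0 := by
    have h1 := hswap (fun u w => μ u * μ w * (g u - g w))
    have h2 : ∑ q ∈ F, μ (ofDual q.2) * μ q.1 * (g (ofDual q.2) - g q.1)
        = -∑ q ∈ F, μ q.1 * μ (ofDual q.2) * (g q.1 - g (ofDual q.2)) := by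
      rw [← Finset.sum_neg_distrib]
      exact Finset.sum_congr rfl fun q _ => by ring
    simp only [hΦdef]
    linarith [h1, h2]
  have hsum_v : ∑ q ∈ F, Φ q * (h (ofDual q.2) - h q.1) = 0 := by
    have h1 := hswap (fun u w => μ u * μ w * (h w - h u))
    have h2 : ∑ q ∈ F, μ (ofDual q.2) * μ q.1 * (h q.1 - h (ofDual q.2))
        = -∑ q ∈ F, μ q.1 * μ (ofDual q.2) * (h (ofDual q.2) - h q.1) := by
      rw [← Finset.sum_neg_distrib]
      exact Finset.sum_congr rfl fun q _ => by ring
    simp only [hΦdef]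
    linarith [h1, h2]
  -- diagonal identifications
  have hAA : ∑ q ∈ F, Φ q * (g q.1 * h q.1) = A := by
    have h1 := hswap (fun u w => μ u * μ w * (g u * h u))
    simp only [hΦdef, hA]
    calc ∑ q ∈ F, μ q.1 * μ (ofDual q.2) * (g q.1 * h q.1)
        = ∑ q ∈ F, μ (ofDual q.2) * μ q.1 * (g (ofDual q.2) * h (ofDual q.2)) := h1
      _ = ∑ q ∈ F, μ q.1 * (g (ofDual q.2) * h (ofDual q.2) * μ (ofDual q.2)) :=
          Finset.sum_congr rfl fun q _ => by ring
  have hA' : ∑ q ∈ F, Φ q * (g (ofDual q.2) * h (ofDual q.2)) = A := by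
    simp only [hΦdef, hA]
    exact Finset.sum_congr rfl fun q _ => by ring
  have hB' : ∑ q ∈ F, Φ q * (g q.1 * h (ofDual q.2)) = B := by
    simp only [hΦdef, hB]
    exact Finset.sum_congr rfl fun q _ => by ring
  have hBB : ∑ q ∈ F, Φ q * (g (ofDual q.2) * h q.1) = B := by
    have h1 := hswap (fun u w => μ u * μ w * (g w * h u))
    simp only [hΦdef, hB]
    calc ∑ q ∈ F, μ q.1 * μ (ofDual q.2) * (g (ofDual q.2) * h q.1)
        = ∑ q ∈ F, μ (ofDual q.2) * μ q.1 * (g q.1 * h (ofDual q.2)) := h1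
      _ = ∑ q ∈ F, (g q.1 * μ q.1) * (h (ofDual q.2) * μ (ofDual q.2)) :=
          Finset.sum_congr rfl fun q _ => by ring
  -- expansions of the three sums in hkey
  have eU : ∑ q ∈ F, Φ q * U q = c * S := by
    have : ∀ q ∈ F, Φ q * U q = Φ q * (g q.1 - g (ofDual q.2)) + c * Φ q := by
      intro q _; simp only [hUdef]; ring
    rw [Finset.sum_congr rfl this, Finset.sum_add_distrib, hsum_u, ← Finset.mul_sum]
    simp [hS]
  have eV : ∑ q ∈ F, Φ q * V q = c' * S := by
    have : ∀ q ∈ F, Φ q * V q = Φ q * (h (ofDual q.2) - h q.1) + c' * Φ q := by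
      intro q _; simp only [hVdef]; ring
    rw [Finset.sum_congr rfl this, Finset.sum_add_distrib, hsum_v, ← Finset.mul_sum]
    simp [hS]
  have eUV : ∑ q ∈ F, Φ q * U q * V q = (2 * B - 2 * A) + c' * 0 + c * 0 + c * c' * S := by
    have expand : ∀ q ∈ F, Φ q * U q * V q =
        (Φ q * (g q.1 * h (ofDual q.2)) + Φ q * (g (ofDual q.2) * h q.1)
          - Φ q * (g q.1 * h q.1) - Φ q * (g (ofDual q.2) * h (ofDual q.2)))
        + c' * (Φ q * (g q.1 - g (ofDual q.2)))
        + c * (Φ q * (h (ofDual q.2) - h q.1))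
        + c * c' * Φ q := by
      intro q _; simp only [hUdef, hVdef]; ring
    rw [Finset.sum_congr rfl expand]
    rw [Finset.sum_add_distrib, Finset.sum_add_distrib, Finset.sum_add_distrib]
    rw [Finset.sum_sub_distrib, Finset.sum_sub_distrib, Finset.sum_add_distrib]
    rw [hAA, hA', hB', hBB, ← Finset.mul_sum, ← Finset.mul_sum, ← Finset.mul_sum,
      hsum_u, hsum_v]
    simp only [hS]
    ring
  rw [eU, eV, eUV] at hkey
  -- conclude
  have hfin : 0 ≤ S * (2 * B - 2 * A) := by nlinarith [hkey]
  rcases hS0.eq_or_lt with hSz | hSpos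
  · -- S = 0 : all Φ vanish on F, so both sides vanish
    have hz : ∀ q ∈ F, Φ q = 0 := by
      intro q hq
      have := (Finset.sum_eq_zero_iff_of_nonneg (fun q _ => hΦ0 q)).1 hSz.symm
      exact this q hq
    have hA0 : A = 0 := by
      rw [hA]
      refine Finset.sum_eq_zero fun q hq => ?_
      have h0 := hz q hq
      simp only [hΦdef] at h0
      calc μ q.1 * (g (ofDual q.2) * h (ofDual q.2) * μ (ofDual q.2))
          = g (ofDual q.2) * h (ofDual q.2) * (μ q.1 * μ (ofDual q.2)) := by ring
        _ = 0 := by rw [h0]; ring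
    have hB0 : B = 0 := by
      rw [hB]
      refine Finset.sum_eq_zero fun q hq => ?_
      have h0 := hz q hq
      simp only [hΦdef] at h0
      calc (g q.1 * μ q.1) * (h (ofDual q.2) * μ (ofDual q.2))
          = g q.1 * h (ofDual q.2) * (μ q.1 * μ (ofDual q.2)) := by ring
        _ = 0 := by rw [h0]; ring
    simp [hA0, hB0]
  · have h0' : S * 0 ≤ S * (2 * B - 2 * A) := by rwa [mul_zero]
    have := le_of_mul_le_mul_left h0' hSpos
    linarith

end Aux

/-- q-FKG inequality for countermonotone functions: with `g` increasing and `h`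
decreasing, the coefficientwise inequality is reversed:
`E(1;q)·E(gh;q) ≪ E(g;q)·E(h;q)`. -/
theorem stmt_1 {L : Type*} [DistribLattice L] [Fintype L]
    (r : L → ℕ) (hr : ∀ x y : L, r x + r y = r (x ⊓ y) + r (x ⊔ y))
    (μ g h : L → ℝ)
    (hμ0 : ∀ x, 0 ≤ μ x) (hg0 : ∀ x, 0 ≤ g x) (hh0 : ∀ x, 0 ≤ h x)
    (hμ : ∀ x y : L, μ x * μ y ≤ μ (x ⊓ y) * μ (x ⊔ y))
    (hg : Monotone g) (hh : Antitone h) :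
    ∀ d : ℕ,
      ((∑ x : L, C (μ x) * X ^ r x) *
        (∑ x : L, C (g x * h x * μ x) * X ^ r x)).coeff d ≤
      ((∑ x : L, C (g x * μ x) * X ^ r x) * (∑ x : L, C (h x * μ x) * X ^ r x)).coeff d := by
  classical
  intro d
  have coeffP : ∀ p s : L → ℝ,
      ((∑ x : L, C (p x) * X ^ r x) * (∑ y : L, C (s y) * X ^ r y)).coeff d =
        ∑ q : L × Lᵒᵈ,
          (if d = r q.1 + r (ofDual q.2) then p q.1 * s (ofDual q.2) else 0) := by
    intro p s
    rw [Finset.sum_mul_sum]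
    have hterm : ∀ x y : L,
        (C (p x) * X ^ r x) * (C (s y) * X ^ r y) = C (p x * s y) * X ^ (r x + r y) := by
      intro x y
      rw [mul_mul_mul_comm, ← C_mul, ← pow_add]
    simp only [finset_sum_coeff, hterm, coeff_C_mul, coeff_X_pow, mul_ite, mul_one, mul_zero]
    calc ∑ x : L, ∑ y : L, (if d = r x + r y then p x * s y else 0)
        = ∑ q : L × L, (if d = r q.1 + r q.2 then p q.1 * s q.2 else 0) :=
          (Fintype.sum_prod_type
            (f := fun q : L × L => if d = r q.1 + r q.2 then p q.1 * s q.2 else 0)).symm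
      _ = ∑ q : L × Lᵒᵈ,
            (if d = r q.1 + r (ofDual q.2) then p q.1 * s (ofDual q.2) else 0) :=
          Fintype.sum_equiv (Equiv.prodCongr (Equiv.refl L) OrderDual.toDual) _ _
            (fun q => rfl)
  have e1 := coeffP μ (fun x => g x * h x * μ x)
  have e2 := coeffP (fun x => g x * μ x) (fun x => h x * μ x)
  simp only at e1 e2
  rw [e1, e2]
  have hsplit : ∀ T : L × Lᵒᵈ → ℝ, ∑ q : L × Lᵒᵈ, T q =
      ∑ ab : L × L, ∑ q ∈ Finset.univ.filter
        (fun q : L × Lᵒᵈ => (q.1 ⊔ ofDual q.2, q.1 ⊓ ofDual q.2) = ab), T q :=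
    fun T => (Finset.sum_fiberwise_of_maps_to (fun q _ => mem_univ _) T).symm
  rw [hsplit (fun q => if d = r q.1 + r (ofDual q.2)
    then μ q.1 * (g (ofDual q.2) * h (ofDual q.2) * μ (ofDual q.2)) else 0)]
  rw [hsplit (fun q => if d = r q.1 + r (ofDual q.2)
    then (g q.1 * μ q.1) * (h (ofDual q.2) * μ (ofDual q.2)) else 0)]
  refine Finset.sum_le_sum fun ab _ => ?_
  obtain ⟨a, b⟩ := ab
  have hmem : ∀ q : L × Lᵒᵈ,
      q ∈ Finset.univ.filter
        (fun q : L × Lᵒᵈ => (q.1 ⊔ ofDual q.2, q.1 ⊓ ofDual q.2) = (a, b)) ↔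
      (q.1 ⊔ ofDual q.2 = a ∧ q.1 ⊓ ofDual q.2 = b) := by
    intro q
    simp [Prod.ext_iff]
  have hrconst : ∀ q ∈ Finset.univ.filter
      (fun q : L × Lᵒᵈ => (q.1 ⊔ ofDual q.2, q.1 ⊓ ofDual q.2) = (a, b)),
      r q.1 + r (ofDual q.2) = r b + r a := by
    intro q hq
    rw [hmem] at hq
    rw [hr q.1 (ofDual q.2), hq.1, hq.2, add_comm]
  by_cases hd : d = r b + r a
  · calc ∑ q ∈ Finset.univ.filter
          (fun q : L × Lᵒᵈ => (q.1 ⊔ ofDual q.2, q.1 ⊓ ofDual q.2) = (a, b)),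
          (if d = r q.1 + r (ofDual q.2)
            then μ q.1 * (g (ofDual q.2) * h (ofDual q.2) * μ (ofDual q.2)) else 0)
        = ∑ q ∈ Finset.univ.filter
            (fun q : L × Lᵒᵈ => (q.1 ⊔ ofDual q.2, q.1 ⊓ ofDual q.2) = (a, b)),
            μ q.1 * (g (ofDual q.2) * h (ofDual q.2) * μ (ofDual q.2)) :=
          Finset.sum_congr rfl fun q hq => by rw [hrconst q hq]; exact if_pos hd
      _ ≤ ∑ q ∈ Finset.univ.filter
            (fun q : L × Lᵒᵈ => (q.1 ⊔ ofDual q.2, q.1 ⊓ ofDual q.2) = (a, b)),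
            (g q.1 * μ q.1) * (h (ofDual q.2) * μ (ofDual q.2)) :=
          fiber_le μ g h hμ0 hg0 hh0 hμ hg hh a b _ hmem
      _ = ∑ q ∈ Finset.univ.filter
            (fun q : L × Lᵒᵈ => (q.1 ⊔ ofDual q.2, q.1 ⊓ ofDual q.2) = (a, b)),
            (if d = r q.1 + r (ofDual q.2)
              then (g q.1 * μ q.1) * (h (ofDual q.2) * μ (ofDual q.2)) else 0) :=
          Finset.sum_congr rfl fun q hq => by rw [hrconst q hq]; exact (if_pos hd).symm
  · have z1 : ∑ q ∈ Finset.univ.filter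
        (fun q : L × Lᵒᵈ => (q.1 ⊔ ofDual q.2, q.1 ⊓ ofDual q.2) = (a, b)),
        (if d = r q.1 + r (ofDual q.2)
          then μ q.1 * (g (ofDual q.2) * h (ofDual q.2) * μ (ofDual q.2)) else 0) = 0 :=
      Finset.sum_eq_zero fun q hq => by rw [hrconst q hq]; exact if_neg hd
    have z2 : ∑ q ∈ Finset.univ.filter
        (fun q : L × Lᵒᵈ => (q.1 ⊔ ofDual q.2, q.1 ⊓ ofDual q.2) = (a, b)),
        (if d = r q.1 + r (ofDual q.2)
          then (g q.1 * μ q.1) * (h (ofDual q.2) * μ (ofDual q.2)) else 0) = 0 :=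
      Finset.sum_eq_zero fun q hq => by rw [hrconst q hq]; exact if_neg hd
    rw [z1, z2]
end

section
/- (FKG inequality) Let L be a finite distributive lattice, μ: L → ℝ≥0 log-supermodular, and g, h: L → ℝ≥0 both increasing. Then (Σ_{x∈L} g(x)μ(x)) · (Σ_{x∈L} h(x)μ(x)) ≤ (Σ_{x∈L} μ(x)) · (Σ_{x∈L} g(x)h(x)μ(x)). -/
/-- The FKG inequality of Fortuin, Kasteleyn and Ginibre. -/
theorem stmt_2 {L : Type*} [DistribLattice L] [Fintype L]
    (μ g h : L → ℝ)
    (hμ0 : ∀ x, 0 ≤ μ x) (hg0 : ∀ x, 0 ≤ g x) (hh0 : ∀ x, 0 ≤ h x)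
    (hμ : ∀ x y : L, μ x * μ y ≤ μ (x ⊓ y) * μ (x ⊔ y))
    (hg : Monotone g) (hh : Monotone h) :
    (∑ x : L, g x * μ x) * (∑ x : L, h x * μ x) ≤
      (∑ x : L, μ x) * (∑ x : L, g x * h x * μ x) := by
  have := fkg (μ := μ) (f := g) (g := h) hμ0 hg0 hh0 hg hh hμ
  simpa [mul_comm, mul_assoc, mul_left_comm] using this
end

section
/- Let Δ and Γ be simplicial complexes on the same finite vertex set V, with f-polynomials f_Δ(q) = Σ_{i≥0} f_{i−1}(Δ) q^i, where f_{i−1}(Δ) is the number of faces of Δ with i vertices (including the empty face for i = 0). Then f_Δ(q) · f_Γ(q) ≪ (1+q)^{|V|} · f_{Δ∩Γ}(q), i.e., every coefficient of (1+q)^{|V|} f_{Δ∩Γ}(q) − f_Δ(q) f_Γ(q) is nonnegative. -/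
open Polynomial

/-!
A `q`-analogue of the Harris–Kleitman inequality, proved the same way, by induction on the
ground set. The coefficientwise order `p ≪ s` is `p.coeff ≤ s.coeff` in the pointwise order.

Splitting off a vertex `a` writes `f_𝒜 = f_{𝒜₀} + q · f_{𝒜₁}`, where `𝒜₀` consists of the faces
avoiding `a` and `𝒜₁` is the link of `a`; for a lower set, `𝒜₁ ⊆ 𝒜₀`. Expanding `f_𝒜 · f_ℬ`, the
outer terms are bounded by induction, and the two cross terms by induction together with
`f_{𝒜₀ ∩ ℬ₁} + f_{𝒜₁ ∩ ℬ₀} ≪ f_{𝒜₀ ∩ ℬ₀} + f_{𝒜₁ ∩ ℬ₁}`, which absorbs the extra factor `1 + q`.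
-/

namespace Polynomial

variable {R : Type*}

section Semiring

variable [Semiring R] [PartialOrder R] {p q r s : R[X]}

lemma coeff_add_le_coeff_add [IsOrderedAddMonoid R] (hpr : p.coeff ≤ r.coeff)
    (hqs : q.coeff ≤ s.coeff) : (p + q).coeff ≤ (r + s).coeff := fun n => by
  simp only [coeff_add]
  exact add_le_add (hpr n) (hqs n)

lemma coeff_mul_le_coeff_mul [IsOrderedRing R] [CanonicallyOrderedAdd R]
    (hpr : p.coeff ≤ r.coeff) (hqs : q.coeff ≤ s.coeff) : (p * q).coeff ≤ (r * s).coeff :=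
  fun n => by
  simp only [coeff_mul]
  exact Finset.sum_le_sum fun x _ => mul_le_mul (hpr x.1) (hqs x.2) zero_le zero_le

end Semiring

lemma coeff_add_X_mul_mul_add_X_mul_le [CommSemiring R] [PartialOrder R] [IsOrderedRing R]
    [CanonicallyOrderedAdd R] {a₀ a₁ b₀ b₁ c₀ c₁ P : R[X]}
    (h₀₀ : (a₀ * b₀).coeff ≤ (P * c₀).coeff) (h₁₁ : (a₁ * b₁).coeff ≤ (P * c₁).coeff)
    (hcross : (a₀ * b₁ + a₁ * b₀).coeff ≤ (P * (c₀ + c₁)).coeff) :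
    ((a₀ + X * a₁) * (b₀ + X * b₁)).coeff ≤ ((1 + X) * P * (c₀ + X * c₁)).coeff :=
  calc ((a₀ + X * a₁) * (b₀ + X * b₁)).coeff
      = (a₀ * b₀ + X * (a₀ * b₁ + a₁ * b₀) + X ^ 2 * (a₁ * b₁)).coeff := congrArg coeff (by ring)
    _ ≤ (P * c₀ + X * (P * (c₀ + c₁)) + X ^ 2 * (P * c₁)).coeff :=
      coeff_add_le_coeff_add (coeff_add_le_coeff_add h₀₀ (coeff_mul_le_coeff_mul le_rfl hcross))
        (coeff_mul_le_coeff_mul le_rfl h₁₁)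
    _ = ((1 + X) * P * (c₀ + X * c₁)).coeff := congrArg coeff (by ring)

end Polynomial

namespace Finset

variable {α : Type*}

noncomputable def fPolynomial (𝒜 : Finset (Finset α)) : ℕ[X] :=
  ∑ s ∈ 𝒜, X ^ #s

lemma fPolynomial_mono {𝒜 ℬ : Finset (Finset α)} (h : 𝒜 ⊆ ℬ) :
    (fPolynomial 𝒜).coeff ≤ (fPolynomial ℬ).coeff := fun n => by
  simp only [fPolynomial, finsetSum_coeff]
  exact sum_le_sum_of_subset h

variable [DecidableEq α]

lemma fPolynomial_union_add_fPolynomial_inter (𝒜 ℬ : Finset (Finset α)) :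
    fPolynomial (𝒜 ∪ ℬ) + fPolynomial (𝒜 ∩ ℬ) = fPolynomial 𝒜 + fPolynomial ℬ :=
  sum_union_inter

lemma fPolynomial_nonMemberSubfamily_add_X_mul_memberSubfamily (a : α)
    (𝒜 : Finset (Finset α)) :
    fPolynomial (𝒜.nonMemberSubfamily a) + X * fPolynomial (𝒜.memberSubfamily a) =
      fPolynomial 𝒜 := by
  have hinj : Set.InjOn (erase · a) ({s ∈ 𝒜 | a ∈ s} : Finset (Finset α)) :=
    (erase_injOn' a).mono fun s hs => (mem_filter.1 hs).2
  unfold fPolynomial memberSubfamily nonMemberSubfamily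
  rw [sum_image hinj, mul_sum, ← sum_filter_not_add_sum_filter 𝒜 (a ∈ ·)]
  refine congrArg _ (sum_congr rfl fun s hs => ?_)
  rw [← pow_succ', card_erase_add_one (mem_filter.1 hs).2]

lemma fPolynomial_inter_add_fPolynomial_inter_le {𝒜₀ 𝒜₁ ℬ₀ ℬ₁ : Finset (Finset α)}
    (h𝒜 : 𝒜₁ ⊆ 𝒜₀) (hℬ : ℬ₁ ⊆ ℬ₀) :
    (fPolynomial (𝒜₀ ∩ ℬ₁) + fPolynomial (𝒜₁ ∩ ℬ₀)).coeff ≤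
      (fPolynomial (𝒜₀ ∩ ℬ₀) + fPolynomial (𝒜₁ ∩ ℬ₁)).coeff := by
  have hunion : 𝒜₀ ∩ ℬ₁ ∪ 𝒜₁ ∩ ℬ₀ ⊆ 𝒜₀ ∩ ℬ₀ :=
    union_subset (inter_subset_inter_left hℬ) (inter_subset_inter_right h𝒜)
  have hinter : 𝒜₀ ∩ ℬ₁ ∩ (𝒜₁ ∩ ℬ₀) = 𝒜₁ ∩ ℬ₁ := by
    ext s
    simp only [mem_inter]
    exact ⟨fun h => ⟨h.2.1, h.1.2⟩, fun h => ⟨⟨h𝒜 h.1, h.2⟩, h.1, hℬ h.2⟩⟩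
  rw [← fPolynomial_union_add_fPolynomial_inter, hinter]
  exact coeff_add_le_coeff_add (fPolynomial_mono hunion) le_rfl

lemma subset_of_mem_nonMemberSubfamily {𝒜 : Finset (Finset α)} {a : α} {s : Finset α}
    (h𝒜 : ∀ t ∈ 𝒜, t ⊆ insert a s) : ∀ t ∈ 𝒜.nonMemberSubfamily a, t ⊆ s := by
  intro t ht
  rw [mem_nonMemberSubfamily] at ht
  exact (subset_insert_iff_of_notMem ht.2).1 (h𝒜 _ ht.1)

lemma subset_of_mem_memberSubfamily {𝒜 : Finset (Finset α)} {a : α} {s : Finset α}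
    (h𝒜 : ∀ t ∈ 𝒜, t ⊆ insert a s) : ∀ t ∈ 𝒜.memberSubfamily a, t ⊆ s := by
  intro t ht
  rw [mem_memberSubfamily] at ht
  exact (subset_insert_iff_of_notMem ht.2).1 ((subset_insert _ _).trans <| h𝒜 _ ht.1)

end Finset

section

open Finset

variable {α : Type*} [DecidableEq α] {𝒜 ℬ : Finset (Finset α)}

theorem IsLowerSet.coeff_fPolynomial_mul_le' (h𝒜 : IsLowerSet (𝒜 : Set (Finset α)))
    (hℬ : IsLowerSet (ℬ : Set (Finset α))) {s : Finset α} (h𝒜s : ∀ t ∈ 𝒜, t ⊆ s)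
    (hℬs : ∀ t ∈ ℬ, t ⊆ s) :
    (fPolynomial 𝒜 * fPolynomial ℬ).coeff ≤ ((1 + X) ^ #s * fPolynomial (𝒜 ∩ ℬ)).coeff := by
  induction s using Finset.induction generalizing 𝒜 ℬ with
  | empty =>
    simp_rw [subset_empty, ← subset_singleton_iff', subset_singleton_iff] at h𝒜s hℬs
    obtain rfl | rfl := h𝒜s
    · simp [fPolynomial]
    obtain rfl | rfl := hℬs <;> simp [fPolynomial]
  | insert a s has ih =>
    have h𝒜₀ := h𝒜.nonMemberSubfamily (a := a)
    have h𝒜₁ := h𝒜.memberSubfamily (a := a)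
    have hℬ₀ := hℬ.nonMemberSubfamily (a := a)
    have hℬ₁ := hℬ.memberSubfamily (a := a)
    have h𝒜s₀ := subset_of_mem_nonMemberSubfamily h𝒜s
    have h𝒜s₁ := subset_of_mem_memberSubfamily h𝒜s
    have hℬs₀ := subset_of_mem_nonMemberSubfamily hℬs
    have hℬs₁ := subset_of_mem_memberSubfamily hℬs
    rw [← fPolynomial_nonMemberSubfamily_add_X_mul_memberSubfamily a 𝒜,
      ← fPolynomial_nonMemberSubfamily_add_X_mul_memberSubfamily a ℬ,
      ← fPolynomial_nonMemberSubfamily_add_X_mul_memberSubfamily a (𝒜 ∩ ℬ),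
      nonMemberSubfamily_inter, memberSubfamily_inter, card_insert_of_notMem has, pow_succ']
    refine coeff_add_X_mul_mul_add_X_mul_le (ih h𝒜₀ hℬ₀ h𝒜s₀ hℬs₀) (ih h𝒜₁ hℬ₁ h𝒜s₁ hℬs₁) ?_
    refine (coeff_add_le_coeff_add (ih h𝒜₀ hℬ₁ h𝒜s₀ hℬs₁) (ih h𝒜₁ hℬ₀ h𝒜s₁ hℬs₀)).trans ?_
    rw [← mul_add]
    exact coeff_mul_le_coeff_mul le_rfl <| fPolynomial_inter_add_fPolynomial_inter_le
      h𝒜.memberSubfamily_subset_nonMemberSubfamily hℬ.memberSubfamily_subset_nonMemberSubfamily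

theorem IsLowerSet.coeff_fPolynomial_mul_le [Fintype α] (h𝒜 : IsLowerSet (𝒜 : Set (Finset α)))
    (hℬ : IsLowerSet (ℬ : Set (Finset α))) :
    (fPolynomial 𝒜 * fPolynomial ℬ).coeff ≤
      ((1 + X) ^ Fintype.card α * fPolynomial (𝒜 ∩ ℬ)).coeff :=
  h𝒜.coeff_fPolynomial_mul_le' hℬ (fun _ _ => subset_univ _) fun _ _ => subset_univ _

end

theorem stmt_3_general {V : Type*} [Fintype V] [DecidableEq V]
    (Δ Γ : Finset (Finset V))
    (hΔdown : ∀ s ∈ Δ, ∀ t ⊆ s, t ∈ Δ)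
    (hΓdown : ∀ s ∈ Γ, ∀ t ⊆ s, t ∈ Γ) :
    ∀ d : ℕ,
      ((∑ F ∈ Δ, (X : Polynomial ℕ) ^ F.card) * (∑ F ∈ Γ, X ^ F.card)).coeff d ≤
      ((1 + X) ^ Fintype.card V * ∑ F ∈ Δ ∩ Γ, X ^ F.card).coeff d :=
  IsLowerSet.coeff_fPolynomial_mul_le (fun _ _ hts hs => hΔdown _ hs _ hts)
    (fun _ _ hts hs => hΓdown _ hs _ hts)

/-- For simplicial complexes `Δ, Γ` on the same finite vertex set `V`,
`f_Δ(q)·f_Γ(q) ≪ (1+q)^{|V|}·f_{Δ∩Γ}(q)` coefficientwise. -/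
theorem stmt_3 {V : Type*} [Fintype V] [DecidableEq V]
    (Δ Γ : Finset (Finset V))
    (hΔdown : ∀ s ∈ Δ, ∀ t ⊆ s, t ∈ Δ)
    (hΓdown : ∀ s ∈ Γ, ∀ t ⊆ s, t ∈ Γ)
    (hΔe : (∅ : Finset V) ∈ Δ) (hΓe : (∅ : Finset V) ∈ Γ) :
    ∀ d : ℕ,
      ((∑ F ∈ Δ, (X : Polynomial ℕ) ^ F.card) * (∑ F ∈ Γ, X ^ F.card)).coeff d ≤
      ((1 + X) ^ Fintype.card V * ∑ F ∈ Δ ∩ Γ, X ^ F.card).coeff d :=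
  stmt_3_general Δ Γ hΔdown hΓdown
end

section
/- Let L be a finite distributive lattice and μ: L → ℝ>0 a strictly positive function. Define d(x,y) = r(x∨y) − r(x∧y), where r is the rank function. If μ(x)μ(y) ≤ μ(x∧y)μ(x∨y) holds for all pairs x, y with d(x,y) = 2, then μ is log-supermodular, i.e., the inequality holds for all pairs x, y ∈ L. -/
section aux
variable {L : Type*} [DistribLattice L] [Fintype L]
  {r : L → ℕ} (hcov : ∀ x y : L, x ⋖ y → r y = r x + 1)

include hcov in
lemma rstrict : ∀ b a : L, a < b → r a < r b := by
  intro b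
  induction b using WellFoundedLT.induction with
  | _ b IH =>
    intro a hab
    obtain ⟨c, hac, hcb⟩ := exists_le_covBy_of_lt hab
    have h2 := hcov _ _ hcb
    rcases eq_or_lt_of_le hac with rfl | h
    · omega
    · have h1 := IH c hcb.lt a h
      omega

include hcov in
lemma covByOfRank {a b : L} (hab : a < b) (hr : r b = r a + 1) : a ⋖ b := by
  refine ⟨hab, fun c hac hcb => ?_⟩
  have := rstrict hcov c a hac
  have := rstrict hcov b c hcb
  omega

include hcov in
lemma step {μ : L → ℝ} (hμpos : ∀ x, 0 < μ x) {n : ℕ}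
    (IH : ∀ k, k < n → ∀ x y : L, r (x ⊔ y) ≤ r (x ⊓ y) + k →
      μ x * μ y ≤ μ (x ⊓ y) * μ (x ⊔ y))
    (x y : L) (hn : r (x ⊔ y) ≤ r (x ⊓ y) + n)
    (hge : r y + 2 ≤ r (x ⊔ y)) (hyx : ¬ y ≤ x) (hxy : ¬ x ≤ y) :
    μ x * μ y ≤ μ (x ⊓ y) * μ (x ⊔ y) := by
  have hmx : x ⊓ y < x := inf_lt_left.2 hxy
  obtain ⟨z, hmz, hzx⟩ := exists_covBy_le_of_lt hmx
  have hrz : r z = r (x ⊓ y) + 1 := hcov _ _ hmz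
  have hzyinf : z ⊓ y = x ⊓ y :=
    le_antisymm (inf_le_inf_right y hzx) (le_inf hmz.lt.le inf_le_right)
  -- diamond: y ⋖ z ⊔ y
  have hdia : y ⋖ z ⊔ y := covBy_sup_of_inf_covBy_left (hzyinf ▸ hmz)
  have hrzy : r (z ⊔ y) = r y + 1 := hcov _ _ hdia
  -- ranks
  have hrmx : r (x ⊓ y) < r y := rstrict hcov y (x ⊓ y) (inf_lt_right.2 hyx)
  -- pair (z, y)
  have hA : μ z * μ y ≤ μ (x ⊓ y) * μ (z ⊔ y) := by
    have := IH (n - 1) (by omega) z y (by rw [hzyinf]; omega)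
    rwa [hzyinf] at this
  -- pair (x, z ⊔ y)
  have hinf2 : x ⊓ (z ⊔ y) = z := by
    rw [inf_sup_left, inf_eq_right.2 hzx, sup_eq_left.2 hmz.lt.le]
  have hsup2 : x ⊔ (z ⊔ y) = x ⊔ y := by
    rw [← sup_assoc, sup_eq_left.2 hzx]
  have hB : μ x * μ (z ⊔ y) ≤ μ z * μ (x ⊔ y) := by
    have := IH (n - 1) (by omega) x (z ⊔ y) (by rw [hinf2, hsup2]; omega)
    rwa [hinf2, hsup2] at this
  have hC := mul_le_mul hB hA (mul_pos (hμpos z) (hμpos y)).le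
    (mul_pos (hμpos z) (hμpos (x ⊔ y))).le
  have hpos : 0 < μ z * μ (z ⊔ y) := mul_pos (hμpos z) (hμpos (z ⊔ y))
  refine le_of_mul_le_mul_right ?_ hpos
  calc μ x * μ y * (μ z * μ (z ⊔ y)) = μ x * μ (z ⊔ y) * (μ z * μ y) := by ring
    _ ≤ μ z * μ (x ⊔ y) * (μ (x ⊓ y) * μ (z ⊔ y)) := hC
    _ = μ (x ⊓ y) * μ (x ⊔ y) * (μ z * μ (z ⊔ y)) := by ring
end aux

section main
variable {L : Type*} [DistribLattice L] [Fintype L]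
  {r : L → ℕ} (hcov : ∀ x y : L, x ⋖ y → r y = r x + 1)

include hcov in
lemma key_s9 {μ : L → ℝ} (hμpos : ∀ x, 0 < μ x)
    (h2 : ∀ x y : L, r (x ⊔ y) = r (x ⊓ y) + 2 →
      μ x * μ y ≤ μ (x ⊓ y) * μ (x ⊔ y)) :
    ∀ n : ℕ, ∀ x y : L, r (x ⊔ y) ≤ r (x ⊓ y) + n →
      μ x * μ y ≤ μ (x ⊓ y) * μ (x ⊔ y) := by
  intro n
  induction n using Nat.strong_induction_on with
  | _ n IH =>
  intro x y hn
  by_cases hxy : x ≤ y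
  · rw [inf_eq_left.2 hxy, sup_eq_right.2 hxy]
  by_cases hyx : y ≤ x
  · rw [inf_eq_right.2 hyx, sup_eq_left.2 hyx]
    exact (mul_comm (μ x) (μ y)).le
  by_cases hd2 : r (x ⊔ y) = r (x ⊓ y) + 2
  · exact h2 x y hd2
  have h1 : r (x ⊓ y) < r x := rstrict hcov x _ (inf_lt_left.2 hxy)
  have h2' : r (x ⊓ y) < r y := rstrict hcov y _ (inf_lt_right.2 hyx)
  have h3 : r x < r (x ⊔ y) := rstrict hcov _ x (left_lt_sup.2 hyx)
  have h4 : r y < r (x ⊔ y) := rstrict hcov _ y (right_lt_sup.2 hxy)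
  have hone : r y + 2 ≤ r (x ⊔ y) ∨ r x + 2 ≤ r (x ⊔ y) := by
    by_contra hc
    push_neg at hc
    have hxc : x ⋖ x ⊔ y := covByOfRank hcov (left_lt_sup.2 hyx) (by omega)
    have hmc : x ⊓ y ⋖ y := inf_covBy_of_covBy_sup_left hxc
    have := hcov _ _ hmc
    omega
  rcases hone with h | h
  · exact step hcov hμpos IH x y hn h hyx hxy
  · have := step hcov hμpos IH y x (by rwa [sup_comm, inf_comm])
      (by rwa [sup_comm]) hxy hyx
    rwa [sup_comm y x, inf_comm y x, mul_comm (μ y)] at this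
end main

/-- In a finite distributive lattice with rank function `r`, a strictly
positive function that satisfies the log-supermodular inequality on all pairs
at rank-distance `d(x,y) = r(x⊔y) − r(x⊓y) = 2` is log-supermodular. -/
theorem stmt_9 {L : Type*} [DistribLattice L] [Fintype L]
    (r : L → ℕ) (hcov : ∀ x y : L, x ⋖ y → r y = r x + 1)
    (μ : L → ℝ) (hμpos : ∀ x, 0 < μ x)
    (h2 : ∀ x y : L, r (x ⊔ y) = r (x ⊓ y) + 2 →
      μ x * μ y ≤ μ (x ⊓ y) * μ (x ⊔ y)) :
    ∀ x y : L, μ x * μ y ≤ μ (x ⊓ y) * μ (x ⊔ y) := by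
  intro x y
  exact key_s9 hcov hμpos h2 (r (x ⊔ y)) x y (by omega)
end

section
/- Let λ and σ be integer partitions (identified with their Young diagrams) such that |σ \ λ| = 1 and |λ \ σ| = 1, and let c be the unique cell of σ not in λ. Then ∏_{a∈λ} h_a^λ · ∏_{b∈σ} h_b^σ ≥ ∏_{a∈λ∪c} h_a^{λ∪c} · ∏_{b∈σ∖c} h_b^{σ∖c}, where h_a^μ denotes the hook length of cell a in shape μ. -/
/-- The hook length of the cell `c` in the Young diagram `μ`: the number of
cells of `μ` in the same row weakly to the right of `c` or in the same column
weakly below `c` (the cell `c` itself counted once). -/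
def hookLen (μ : YoungDiagram) (c : ℕ × ℕ) : ℕ :=
  (μ.cells.filter
    (fun d => (d.1 = c.1 ∧ c.2 ≤ d.2) ∨ (d.2 = c.2 ∧ c.1 ≤ d.1))).card

private lemma nat_aux {u m x y : ℕ} (h : u + m = x + y) (hx : m ≤ x) (hy : m ≤ y) :
    u * m ≤ x * y := by
  obtain ⟨k, rfl⟩ := Nat.le.dest hx
  have hu : u = y + k := by omega
  subst hu
  calc (y + k) * m = y * m + k * m := by ring
    _ ≤ y * m + k * y := by
        have := Nat.mul_le_mul_left k hy
        omega
    _ = (m + k) * y := by ring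

/-- pointwise hook inequality -/
lemma hook_pointwise (lam sgm : YoungDiagram) (a : ℕ × ℕ) :
    hookLen (lam ⊔ sgm) a * hookLen (lam ⊓ sgm) a ≤ hookLen lam a * hookLen sgm a := by
  unfold hookLen
  rw [YoungDiagram.cells_sup, YoungDiagram.cells_inf, Finset.filter_union,
    Finset.filter_inter_distrib]
  apply nat_aux
  · exact Finset.card_union_add_card_inter _ _
  · exact Finset.card_le_card (Finset.inter_subset_left)
  · exact Finset.card_le_card (Finset.inter_subset_right)

lemma hook_eq_one (μ : YoungDiagram) (c : ℕ × ℕ) (hc : c ∈ μ)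
    (h : ∀ e ∈ μ.cells, ((e.1 = c.1 ∧ c.2 ≤ e.2) ∨ (e.2 = c.2 ∧ c.1 ≤ e.1)) → e = c) :
    hookLen μ c = 1 := by
  unfold hookLen
  rw [Finset.card_eq_one]
  refine ⟨c, ?_⟩
  rw [Finset.eq_singleton_iff_unique_mem]
  constructor
  · exact Finset.mem_filter.mpr ⟨(YoungDiagram.mem_cells c).mpr hc, Or.inl ⟨rfl, le_refl _⟩⟩
  · intro e he
    rw [Finset.mem_filter] at he
    exact h e he.1 he.2

lemma hook_mem (μ : YoungDiagram) (c e : ℕ × ℕ) (he : e ∈ μ)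
    (h : (e.1 = c.1 ∧ c.2 ≤ e.2) ∨ (e.2 = c.2 ∧ c.1 ≤ e.1)) : c ∈ μ := by
  have he' : (e.1, e.2) ∈ μ := by simpa using he
  have : (c.1, c.2) ∈ μ := by
    rcases h with ⟨h1, h2⟩ | ⟨h1, h2⟩
    · exact μ.up_left_mem (le_of_eq h1.symm) h2 he'
    · exact μ.up_left_mem h2 (le_of_eq h1.symm) he'
  simpa using this

/-- If `σ ∖ λ` and `λ ∖ σ` each consist of a single cell, then the hook
products satisfy
`∏_{a∈λ} h_a^λ · ∏_{b∈σ} h_b^σ ≥ ∏_{a∈λ∨σ} h_a^{λ∨σ} · ∏_{b∈λ∧σ} h_b^{λ∧σ}`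
(here `λ∨σ = λ∪c` and `λ∧σ = σ∖c` where `{c} = σ∖λ`). -/
theorem stmt_10 (lam sgm : YoungDiagram) (c : ℕ × ℕ)
    (h1 : sgm.cells \ lam.cells = {c})
    (h2 : (lam.cells \ sgm.cells).card = 1) :
    (∏ a ∈ (lam ⊔ sgm).cells, hookLen (lam ⊔ sgm) a) *
      (∏ b ∈ (lam ⊓ sgm).cells, hookLen (lam ⊓ sgm) b) ≤
    (∏ a ∈ lam.cells, hookLen lam a) * (∏ b ∈ sgm.cells, hookLen sgm b) := by
  obtain ⟨d, hd⟩ := Finset.card_eq_one.mp h2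
  have hmemc : ∀ x : ℕ × ℕ, (x ∈ sgm ∧ x ∉ lam) ↔ x = c := by
    intro x
    rw [← Finset.mem_singleton, ← h1, Finset.mem_sdiff]
    simp [YoungDiagram.mem_cells]
  have hmemd : ∀ x : ℕ × ℕ, (x ∈ lam ∧ x ∉ sgm) ↔ x = d := by
    intro x
    rw [← Finset.mem_singleton, ← hd, Finset.mem_sdiff]
    simp [YoungDiagram.mem_cells]
  have hcs : c ∈ sgm := ((hmemc c).mpr rfl).1
  have hcl : c ∉ lam := ((hmemc c).mpr rfl).2
  have hdl : d ∈ lam := ((hmemd d).mpr rfl).1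
  have hds : d ∉ sgm := ((hmemd d).mpr rfl).2
  have hcd : c ≠ d := fun h => hcl (h ▸ hdl)
  -- uniqueness of cells dominating c in lam ⊔ sgm
  have huc : ∀ e ∈ (lam ⊔ sgm).cells,
      ((e.1 = c.1 ∧ c.2 ≤ e.2) ∨ (e.2 = c.2 ∧ c.1 ≤ e.1)) → e = c := by
    intro e he hP
    rw [YoungDiagram.mem_cells, YoungDiagram.mem_sup] at he
    rcases he with he | he
    · exact absurd (hook_mem lam c e he hP) hcl
    · by_cases hel : e ∈ lam
      · exact absurd (hook_mem lam c e hel hP) hcl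
      · exact (hmemc e).mp ⟨he, hel⟩
  have hud : ∀ e ∈ (lam ⊔ sgm).cells,
      ((e.1 = d.1 ∧ d.2 ≤ e.2) ∨ (e.2 = d.2 ∧ d.1 ≤ e.1)) → e = d := by
    intro e he hP
    rw [YoungDiagram.mem_cells, YoungDiagram.mem_sup] at he
    rcases he with he | he
    · by_cases hes : e ∈ sgm
      · exact absurd (hook_mem sgm d e hes hP) hds
      · exact (hmemd e).mp ⟨he, hes⟩
    · exact absurd (hook_mem sgm d e he hP) hds
  have hsupc : hookLen (lam ⊔ sgm) c = 1 := by
    apply hook_eq_one _ _ (YoungDiagram.mem_sup.mpr (Or.inr hcs)) huc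
  have hsupd : hookLen (lam ⊔ sgm) d = 1 := by
    apply hook_eq_one _ _ (YoungDiagram.mem_sup.mpr (Or.inl hdl)) hud
  have hsgmc : hookLen sgm c = 1 := by
    apply hook_eq_one _ _ hcs
    intro e he hP
    exact huc e (by rw [YoungDiagram.mem_cells] at he ⊢; exact YoungDiagram.mem_sup.mpr (Or.inr he)) hP
  have hlamd : hookLen lam d = 1 := by
    apply hook_eq_one _ _ hdl
    intro e he hP
    exact hud e (by rw [YoungDiagram.mem_cells] at he ⊢; exact YoungDiagram.mem_sup.mpr (Or.inl he)) hP
  -- set decompositions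
  have hcni : c ∉ (lam ⊓ sgm).cells := by
    rw [YoungDiagram.mem_cells, YoungDiagram.mem_inf]; tauto
  have hdni : d ∉ (lam ⊓ sgm).cells := by
    rw [YoungDiagram.mem_cells, YoungDiagram.mem_inf]; tauto
  have hlc : lam.cells = insert d (lam ⊓ sgm).cells := by
    ext x
    rw [Finset.mem_insert, YoungDiagram.mem_cells, YoungDiagram.mem_cells, YoungDiagram.mem_inf]
    constructor
    · intro hx
      by_cases hxs : x ∈ sgm
      · exact Or.inr ⟨hx, hxs⟩
      · exact Or.inl ((hmemd x).mp ⟨hx, hxs⟩)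
    · rintro (rfl | ⟨hx, _⟩) <;> [exact hdl; exact hx]
  have hsc : sgm.cells = insert c (lam ⊓ sgm).cells := by
    ext x
    rw [Finset.mem_insert, YoungDiagram.mem_cells, YoungDiagram.mem_cells, YoungDiagram.mem_inf]
    constructor
    · intro hx
      by_cases hxl : x ∈ lam
      · exact Or.inr ⟨hxl, hx⟩
      · exact Or.inl ((hmemc x).mp ⟨hx, hxl⟩)
    · rintro (rfl | ⟨_, hx⟩) <;> [exact hcs; exact hx]
  have hsupcells : (lam ⊔ sgm).cells = insert c (insert d (lam ⊓ sgm).cells) := by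
    rw [YoungDiagram.cells_sup, hlc, hsc]
    ext x
    simp only [Finset.mem_union, Finset.mem_insert]
    tauto
  have hcnotin : c ∉ insert d (lam ⊓ sgm).cells := by
    rw [Finset.mem_insert]; tauto
  rw [hsupcells, hlc, hsc, Finset.prod_insert hcnotin, Finset.prod_insert hdni,
    Finset.prod_insert hdni, Finset.prod_insert hcni, hsupc, hsupd, hlamd, hsgmc]
  simp only [one_mul]
  calc (∏ a ∈ (lam ⊓ sgm).cells, hookLen (lam ⊔ sgm) a) *
        ∏ b ∈ (lam ⊓ sgm).cells, hookLen (lam ⊓ sgm) b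
      = ∏ a ∈ (lam ⊓ sgm).cells, hookLen (lam ⊔ sgm) a * hookLen (lam ⊓ sgm) a := by
        rw [Finset.prod_mul_distrib]
    _ ≤ ∏ a ∈ (lam ⊓ sgm).cells, hookLen lam a * hookLen sgm a := by
        apply Finset.prod_le_prod
        · intros; positivity
        · intro a _; exact hook_pointwise lam sgm a
    _ = (∏ a ∈ (lam ⊓ sgm).cells, hookLen lam a) * ∏ b ∈ (lam ⊓ sgm).cells, hookLen sgm b := by
        rw [Finset.prod_mul_distrib]
end

section
/- Let 0 ≤ s ≤ t be real numbers, μ: Y → ℝ≥0 a log-supermodular function on Young's lattice, and g, h: Y → ℝ≥0 both increasing with respect to containment of partitions. Define formal power series F(k;z) = Σ_{λ∈Y} k(λ) μ(λ) f_λ^t z^{|λ|}/(|λ|!)^s. Then every coefficient of F(1;z)·F(gh;z) − F(g;z)·F(h;z) is nonnegative. -/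
open scoped Classical

/-- The number of standard Young tableaux of shape `μ`, counted as the number
of saturated chains from `∅` to `μ` in Young's lattice. -/
noncomputable def fSYT (μ : YoungDiagram) : ℕ :=
  Nat.card {l : List YoungDiagram //
    l.Chain' (· ⋖ ·) ∧ l.head? = some ⊥ ∧ l.getLast? = some μ}

/-- The power series `F(k;z) = Σ_λ k(λ) μ(λ) f_λ^t z^{|λ|}/(|λ|!)^s`. -/
noncomputable def Fser (μ : YoungDiagram → ℝ) (s t : ℝ) (k : YoungDiagram → ℝ) :
    PowerSeries ℝ :=
  PowerSeries.mk fun n =>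
    ∑ᶠ lam : {m : YoungDiagram // m.card = n},
      k lam.1 * μ lam.1 * (fSYT lam.1 : ℝ) ^ t / (n.factorial : ℝ) ^ s

/-!
Write `w(λ) = μ(λ) f_λ^t / (|λ|!)^s`, so that `F(k; z) = Σ_λ k(λ) w(λ) z^{|λ|}`. The coefficient
inequality is a graded form of the Ahlswede–Daykin four functions theorem, applied to
`g w, h w, g h w, w`; what it needs is that `w` is log-supermodular.

Since `f_λ^t / (|λ|!)^s = (f_λ / |λ|!)^t (|λ|!)^(t - s)` with `t, t - s ≥ 0`, it suffices that
`|λ|!` and `f_λ / |λ|!` are log-supermodular. The first holds because `|λ ∧ σ| + |λ ∨ σ| =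
|λ| + |σ|`. For the second, the number `W_N(λ)` of multichains `∅ ≤ λ₁ ≤ ⋯ ≤ λ_N = λ` is
log-supermodular by induction on `N` (each step is the four functions theorem), and
`W_N(λ) / N^{|λ|} → f_λ / |λ|!` as `N → ∞`.

The graded four functions theorem is proved on a Boolean lattice by grouping pairs `(A, B)`
according to `A ∩ B` and `A ∆ B` and inducting on `A ∆ B`; Young's lattice embeds in a Boolean
lattice through its cells, preserving rank, with all functions extended by zero.
-/

open Finset Filter

def IsLogSupermodular {α : Type*} [Lattice α] (f : α → ℝ) : Prop :=
  ∀ x y, f x * f y ≤ f (x ⊓ y) * f (x ⊔ y)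

section IsLogSupermodular

variable {α : Type*} [Lattice α] {f g : α → ℝ}

lemma IsLogSupermodular.mul (hf : IsLogSupermodular f) (hg : IsLogSupermodular g)
    (hf0 : ∀ x, 0 ≤ f x) (hg0 : ∀ x, 0 ≤ g x) : IsLogSupermodular fun x => f x * g x :=
  fun x y => calc
    f x * g x * (f y * g y) = (f x * f y) * (g x * g y) := by ring
    _ ≤ (f (x ⊓ y) * f (x ⊔ y)) * (g (x ⊓ y) * g (x ⊔ y)) :=
      mul_le_mul (hf x y) (hg x y) (mul_nonneg (hg0 x) (hg0 y)) (mul_nonneg (hf0 _) (hf0 _))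
    _ = f (x ⊓ y) * g (x ⊓ y) * (f (x ⊔ y) * g (x ⊔ y)) := by ring

lemma IsLogSupermodular.rpow (hf : IsLogSupermodular f) (hf0 : ∀ x, 0 ≤ f x) {r : ℝ}
    (hr : 0 ≤ r) : IsLogSupermodular fun x => f x ^ r := fun x y => by
  rw [← Real.mul_rpow (hf0 x) (hf0 y), ← Real.mul_rpow (hf0 _) (hf0 _)]
  exact Real.rpow_le_rpow (mul_nonneg (hf0 x) (hf0 y)) (hf x y) hr

lemma IsLogSupermodular.mul_le_of_monotone (hw : IsLogSupermodular f) (hw0 : ∀ x, 0 ≤ f x)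
    {g h : α → ℝ} (hg : Monotone g) (hh : Monotone h) (hg0 : ∀ x, 0 ≤ g x)
    (hh0 : ∀ x, 0 ≤ h x) (x y : α) :
    g x * f x * (h y * f y) ≤ g (x ⊔ y) * h (x ⊔ y) * f (x ⊔ y) * f (x ⊓ y) :=
  calc g x * f x * (h y * f y) = (g x * h y) * (f x * f y) := by ring
    _ ≤ (g (x ⊔ y) * h (x ⊔ y)) * (f (x ⊓ y) * f (x ⊔ y)) :=
      mul_le_mul (mul_le_mul (hg le_sup_left) (hh le_sup_right) (hh0 y) (hg0 _)) (hw x y)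
        (mul_nonneg (hw0 x) (hw0 y)) (mul_nonneg (hg0 _) (hh0 _))
    _ = g (x ⊔ y) * h (x ⊔ y) * f (x ⊔ y) * f (x ⊓ y) := by ring

end IsLogSupermodular

lemma Nat.factorial_mul_factorial_le_of_add_eq {a b c d : ℕ} (hab : a ≤ b) (hac : a ≤ c)
    (h : a + d = b + c) : b.factorial * c.factorial ≤ a.factorial * d.factorial := by
  obtain ⟨k, rfl⟩ := Nat.exists_eq_add_of_le hab
  obtain rfl : d = c + k := by omega
  rw [← Nat.factorial_mul_ascFactorial, ← Nat.factorial_mul_ascFactorial]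
  calc a.factorial * (a + 1).ascFactorial k * c.factorial
      ≤ a.factorial * (c + 1).ascFactorial k * c.factorial := by
        gcongr
    _ = a.factorial * (c.factorial * (c + 1).ascFactorial k) := by ring

lemma isLogSupermodular_grade_factorial {α : Type*} [Lattice α] [GradeOrder ℕ α]
    (hmod : ∀ x y : α, grade ℕ (x ⊓ y) + grade ℕ (x ⊔ y) = grade ℕ x + grade ℕ y) :
    IsLogSupermodular fun P : α => ((grade ℕ P).factorial : ℝ) := fun x y => by
  dsimp only
  exact_mod_cast Nat.factorial_mul_factorial_le_of_add_eq (grade_mono inf_le_left)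
    (grade_mono inf_le_right) (hmod x y)

lemma Nat.sum_range_mul_choose_succ (a : ℕ → ℕ) (r N : ℕ) (ha : a (r + 1) = 0) :
    ∑ k ∈ range (r + 1), a k * (N + 1).choose k =
      ∑ k ∈ range (r + 1), (a k + a (k + 1)) * N.choose k := by
  simp only [add_mul, sum_add_distrib]
  rw [sum_range_succ (fun k => a (k + 1) * N.choose k), ha, zero_mul, add_zero,
    sum_range_succ' (fun k => a k * (N + 1).choose k),
    sum_range_succ' (fun k => a k * N.choose k)]
  simp only [Nat.choose_succ_succ', mul_add, sum_add_distrib, Nat.choose_zero_right]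
  ring

lemma tendsto_choose_div_pow_self (k : ℕ) :
    Tendsto (fun N : ℕ => (N.choose k : ℝ) / (N : ℝ) ^ k) atTop (nhds (1 / k.factorial)) := by
  have h := (isEquivalent_choose k).div
    (Asymptotics.IsEquivalent.refl (u := fun N : ℕ => (N : ℝ) ^ k))
  refine h.symm.tendsto_nhds (tendsto_const_nhds.congr' ?_)
  filter_upwards [eventually_ne_atTop 0] with N hN
  simp only [Pi.div_apply]
  field_simp

lemma tendsto_choose_div_pow_of_lt {k p : ℕ} (h : k < p) :
    Tendsto (fun N : ℕ => (N.choose k : ℝ) / (N : ℝ) ^ p) atTop (nhds 0) :=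
  ((isTheta_choose k).isBigO.trans_isLittleO
    ((Asymptotics.isLittleO_pow_pow_atTop_of_lt h).comp_tendsto
      tendsto_natCast_atTop_atTop)).tendsto_div_nhds_zero

section ChainCounting

variable {α : Type*} [PartialOrder α] [OrderBot α] [LocallyFiniteOrderBot α]

/-- The number of chains `⊥ = x₀ < x₁ < ⋯ < xₖ = P`. -/
noncomputable def strictChainCount : ℕ → α → ℕ
  | 0, P => if P = ⊥ then 1 else 0
  | k + 1, P => ∑ ν ∈ Iio P, strictChainCount k ν

/-- The number of multichains `⊥ = x₀ ≤ x₁ ≤ ⋯ ≤ x_N = P`. -/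
noncomputable def multichainCount : ℕ → α → ℕ
  | 0, P => if P = ⊥ then 1 else 0
  | N + 1, P => ∑ ν ∈ Iic P, multichainCount N ν

variable [GradeOrder ℕ α]

lemma strictChainCount_eq_zero_of_grade_lt :
    ∀ {k : ℕ} {P : α}, grade ℕ P < k → strictChainCount k P = 0
  | k + 1, P, h => sum_eq_zero fun ν hν =>
      strictChainCount_eq_zero_of_grade_lt
        (by have := grade_strictMono (𝕆 := ℕ) (mem_Iio.mp hν); omega)

/-- A multichain of length `N` is a strict chain of length `k` together with the `k` steps
among `N` at which it moves. -/
lemma multichainCount_eq_sum (N : ℕ) (P : α) :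
    multichainCount N P =
      ∑ k ∈ range (grade ℕ P + 1), strictChainCount k P * N.choose k := by
  induction N generalizing P with
  | zero =>
    rw [sum_range_succ', sum_eq_zero fun k _ => by rw [Nat.choose_zero_succ, mul_zero]]
    simp [multichainCount, strictChainCount]
  | succ N ih =>
    have hext : ∀ ν ∈ Iic P, multichainCount N ν =
        ∑ k ∈ range (grade ℕ P + 1), strictChainCount k ν * N.choose k := fun ν hν => by
      rw [ih]
      refine sum_subset (fun k hk => ?_) fun k _ hk => ?_
      · have := grade_mono (𝕆 := ℕ) (mem_Iic.mp hν)
        simp only [mem_range] at hk ⊢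
        omega
      · rw [strictChainCount_eq_zero_of_grade_lt (by simpa using hk), zero_mul]
    rw [multichainCount, sum_congr rfl hext, sum_comm,
      Nat.sum_range_mul_choose_succ (strictChainCount · P) _ _
        (strictChainCount_eq_zero_of_grade_lt (Nat.lt_succ_self _))]
    refine sum_congr rfl fun k _ => ?_
    rw [← sum_mul, Iic_eq_cons_Iio, sum_cons]
    rfl

lemma tendsto_multichainCount_div_pow (P : α) :
    Tendsto (fun N : ℕ => (multichainCount N P : ℝ) / (N : ℝ) ^ grade ℕ P) atTop
      (nhds ((strictChainCount (grade ℕ P) P : ℝ) / (grade ℕ P).factorial)) := by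
  set r := grade ℕ P
  have hsplit : ∀ N : ℕ, (multichainCount N P : ℝ) / (N : ℝ) ^ r =
      ∑ k ∈ range r, (strictChainCount k P : ℝ) * ((N.choose k : ℝ) / (N : ℝ) ^ r) +
        (strictChainCount r P : ℝ) * ((N.choose r : ℝ) / (N : ℝ) ^ r) := fun N => by
    rw [multichainCount_eq_sum, sum_range_succ]
    push_cast
    simp only [add_div, sum_div, mul_div_assoc, r]
  simp only [hsplit]
  convert (tendsto_finsetSum (range r) fun k hk =>
    (tendsto_choose_div_pow_of_lt (mem_range.mp hk)).const_mul (strictChainCount k P : ℝ)).add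
    ((tendsto_choose_div_pow_self r).const_mul (strictChainCount r P : ℝ)) using 2
  simp [div_eq_mul_inv]

end ChainCounting

section DistribLattice

variable {α : Type*} [DistribLattice α] [OrderBot α] [LocallyFiniteOrderBot α]

lemma isLogSupermodular_multichainCount (N : ℕ) :
    IsLogSupermodular fun P : α => (multichainCount N P : ℝ) := by
  induction N with
  | zero =>
    intro x y
    by_cases h : x = ⊥ ∧ y = ⊥
    · obtain ⟨rfl, rfl⟩ := h
      simp
    · have : (multichainCount 0 x : ℝ) * multichainCount 0 y = 0 := by
        simp only [multichainCount]
        split_ifs <;> simp_all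
      rw [this]
      positivity
  | succ N ih =>
    intro x y
    simp only [multichainCount, Nat.cast_sum]
    have hnonneg : 0 ≤ fun P : α => (multichainCount N P : ℝ) := fun _ => Nat.cast_nonneg _
    refine (four_functions_theorem _ _ _ _ hnonneg hnonneg hnonneg hnonneg ih
      (Iic x) (Iic y)).trans (mul_le_mul ?_ ?_ (sum_nonneg fun _ _ => hnonneg _)
        (sum_nonneg fun _ _ => hnonneg _))
    · refine sum_le_sum_of_subset_of_nonneg (fun P hP => ?_) fun _ _ _ => hnonneg _
      obtain ⟨a, ha, b, hb, rfl⟩ := mem_infs.mp hP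
      exact mem_Iic.mpr (inf_le_inf (mem_Iic.mp ha) (mem_Iic.mp hb))
    · refine sum_le_sum_of_subset_of_nonneg (fun P hP => ?_) fun _ _ _ => hnonneg _
      obtain ⟨a, ha, b, hb, rfl⟩ := mem_sups.mp hP
      exact mem_Iic.mpr (sup_le_sup (mem_Iic.mp ha) (mem_Iic.mp hb))

end DistribLattice

instance finite_covBy {α : Type*} [Preorder α] [LocallyFiniteOrderBot α] (P : α) :
    Finite {m : α // m ⋖ P} :=
  ((Set.finite_Iio P).subset fun _ h => CovBy.lt h).to_subtype

section CoverChains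

variable {α : Type*} [PartialOrder α] [OrderBot α]

def CoverChainTo (P : α) : Type _ :=
  {l : List α // l.IsChain (· ⋖ ·) ∧ l.head? = some ⊥ ∧ l.getLast? = some P}

instance : Unique (CoverChainTo (⊥ : α)) where
  default := ⟨[⊥], List.isChain_singleton _, rfl, rfl⟩
  uniq := by
    rintro ⟨_ | ⟨x, _ | ⟨y, l⟩⟩, hc, hh, hl⟩
    · simp at hh
    · obtain rfl : x = ⊥ := by simpa using hh
      rfl
    · obtain rfl : x = ⊥ := by simpa using hh
      have hlt := List.pairwise_cons.mp ((hc.imp fun _ _ h => h.lt).pairwise)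
      exact absurd (hlt.1 ⊥ (List.mem_of_getLast? hl)) (lt_irrefl _)

def CoverChainTo.snoc {P : α} (x : Σ ν : {m : α // m ⋖ P}, CoverChainTo (ν : α)) :
    CoverChainTo P :=
  ⟨x.2.1 ++ [P], List.isChain_append.mpr ⟨x.2.2.1, List.isChain_singleton _, by
      simpa [x.2.2.2.2] using x.1.2⟩,
    by
      obtain ⟨_, ⟨_ | _, _, hh, _⟩⟩ := x
      · simp at hh
      · exact hh,
    List.getLast?_concat⟩

lemma CoverChainTo.snoc_bijective {P : α} (hP : P ≠ ⊥) :
    Function.Bijective (CoverChainTo.snoc (P := P)) := by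
  constructor
  · rintro ⟨⟨ν₁, h₁⟩, ⟨l₁, p₁⟩⟩ ⟨⟨ν₂, h₂⟩, ⟨l₂, p₂⟩⟩ heq
    obtain rfl : l₁ = l₂ := List.append_cancel_right (congrArg Subtype.val heq)
    obtain rfl : ν₁ = ν₂ := Option.some_injective _ (p₁.2.2.symm.trans p₂.2.2)
    rfl
  · rintro ⟨l, hc, hh, hl⟩
    have hne : l ≠ [] := by rintro rfl; simp at hh
    have hlast : l.dropLast ++ [P] = l := by
      rw [List.getLast?_eq_getLast_of_ne_nil hne, Option.some_inj] at hl
      rw [← hl, List.dropLast_append_getLast]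
    have hdl : l.dropLast ≠ [] := by
      rintro h0
      rw [h0, List.nil_append] at hlast
      subst hlast
      exact hP (by simpa using hh)
    rw [← hlast, List.isChain_append] at hc
    refine ⟨⟨⟨l.dropLast.getLast hdl, hc.2.2 _ (List.getLast?_eq_getLast_of_ne_nil hdl) _ rfl⟩,
      ⟨l.dropLast, hc.1, ?_, List.getLast?_eq_getLast_of_ne_nil hdl⟩⟩, Subtype.ext hlast⟩
    rwa [← hlast, List.head?_append_of_ne_nil _ hdl] at hh

variable [LocallyFiniteOrderBot α] [WellFoundedLT α]

instance (P : α) : Finite (CoverChainTo P) := by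
  induction P using WellFoundedLT.induction with
  | _ P ih =>
    by_cases hP : P = ⊥
    · subst hP
      infer_instance
    · have : ∀ ν : {m : α // m ⋖ P}, Finite (CoverChainTo (ν : α)) := fun ν => ih ν ν.2.lt
      exact Finite.of_surjective _ (CoverChainTo.snoc_bijective hP).2

lemma card_coverChainTo {P : α} (hP : P ≠ ⊥) :
    Nat.card (CoverChainTo P) = ∑ ν ∈ (Iio P).filter (· ⋖ P), Nat.card (CoverChainTo ν) := by
  have := Fintype.ofFinite {m : α // m ⋖ P}
  rw [← Nat.card_congr (Equiv.ofBijective _ (CoverChainTo.snoc_bijective hP)), Nat.card_sigma]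
  refine (sum_subtype _ (fun ν => ?_) fun ν => Nat.card (CoverChainTo ν)).symm
  simp only [mem_filter, mem_Iio]
  exact and_iff_right_of_imp CovBy.lt

end CoverChains

lemma card_coverChainTo_eq_strictChainCount {α : Type*} [PartialOrder α] [OrderBot α]
    [LocallyFiniteOrderBot α] [GradeMinOrder ℕ α] (P : α) :
    Nat.card (CoverChainTo P) = strictChainCount (grade ℕ P) P := by
  induction P using WellFoundedLT.induction with
  | _ P ih =>
    by_cases hP : P = ⊥
    · subst hP
      simp [grade_bot, strictChainCount]
    obtain ⟨q, hq⟩ : ∃ q, grade ℕ P = q + 1 := Nat.exists_eq_add_one.mpr <| by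
      simpa [grade_bot] using grade_strictMono (𝕆 := ℕ) (bot_lt_iff_ne_bot.mpr hP)
    have hcov : ∀ ν, ν ⋖ P → grade ℕ ν = q := fun ν h => by
      have := Nat.covBy_iff_add_one_eq.mp (h.grade ℕ)
      omega
    rw [card_coverChainTo hP, hq, strictChainCount,
      ← sum_filter_of_ne (p := (· ⋖ P)) (f := strictChainCount q) ?_]
    · refine sum_congr rfl fun ν hν => ?_
      have hνP := (mem_filter.mp hν).2
      rw [ih ν hνP.lt, hcov ν hνP]
    · intro ν hν hne
      have hle : q ≤ grade ℕ ν := not_lt.mp (mt strictChainCount_eq_zero_of_grade_lt hne)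
      have hlt := grade_strictMono (𝕆 := ℕ) (mem_Iio.mp hν)
      exact (covBy_iff_lt_covBy_grade (𝕆 := ℕ)).mpr
        ⟨mem_Iio.mp hν, Nat.covBy_iff_add_one_eq.mpr (by omega)⟩

lemma isLogSupermodular_card_coverChainTo_div_factorial {α : Type*} [DistribLattice α]
    [OrderBot α] [LocallyFiniteOrderBot α] [GradeMinOrder ℕ α]
    (hmod : ∀ x y : α, grade ℕ (x ⊓ y) + grade ℕ (x ⊔ y) = grade ℕ x + grade ℕ y) :
    IsLogSupermodular fun P : α => (Nat.card (CoverChainTo P) : ℝ) / (grade ℕ P).factorial := by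
  intro x y
  simp only [card_coverChainTo_eq_strictChainCount]
  refine le_of_tendsto_of_tendsto
    ((tendsto_multichainCount_div_pow x).mul (tendsto_multichainCount_div_pow y))
    ((tendsto_multichainCount_div_pow (x ⊓ y)).mul (tendsto_multichainCount_div_pow (x ⊔ y)))
    (Eventually.of_forall fun N => ?_)
  dsimp only
  rw [div_mul_div_comm, div_mul_div_comm, ← pow_add, ← pow_add, hmod]
  exact div_le_div_of_nonneg_right (isLogSupermodular_multichainCount N x y) (by positivity)

namespace YoungDiagram

lemma card_inf_add_card_sup (x y : YoungDiagram) :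
    (x ⊓ y).card + (x ⊔ y).card = x.card + y.card := by
  simpa [YoungDiagram.card, cells_inf, cells_sup, add_comm] using
    card_union_add_card_inter x.cells y.cells

def eraseCorner (μ : YoungDiagram) (c : ℕ × ℕ) (hc : ∀ d ∈ μ, c ≤ d → d = c) :
    YoungDiagram where
  cells := μ.cells.erase c
  isLowerSet a b hba ha := by
    simp only [coe_erase, Set.mem_sdiff, mem_coe, mem_cells, Set.mem_singleton_iff] at ha ⊢
    exact ⟨μ.isLowerSet hba ha.1, fun hbc => ha.2 (hc a ha.1 (hbc ▸ hba))⟩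

lemma card_add_one_of_covBy {x y : YoungDiagram} (h : x ⋖ y) : x.card + 1 = y.card := by
  have hne : (y.cells \ x.cells).Nonempty :=
    sdiff_nonempty.mpr fun hyx => h.lt.not_ge (cells_subset_iff.mp hyx)
  obtain ⟨c, hc⟩ := Finset.exists_maximal hne
  have hcy : c ∈ y.cells := (mem_sdiff.mp hc.prop).1
  have hcx : c ∉ x.cells := (mem_sdiff.mp hc.prop).2
  have hcorner : ∀ d ∈ y, c ≤ d → d = c := fun d hd hcd =>
    le_antisymm (hc.2 (mem_sdiff.mpr ⟨hd, fun hdx => hcx (x.isLowerSet hcd hdx)⟩) hcd) hcd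
  have hxz : x ≤ y.eraseCorner c hcorner := fun a ha =>
    mem_erase.mpr ⟨fun hac => hcx (hac ▸ ha), h.le ha⟩
  have hzy : y.eraseCorner c hcorner < y :=
    cells_ssubset_iff.mp (erase_ssubset hcy)
  obtain rfl : x = y.eraseCorner c hcorner :=
    ((h.eq_or_eq hxz hzy.le).resolve_right hzy.ne).symm
  exact card_erase_add_one hcy

instance : GradeMinOrder ℕ YoungDiagram where
  grade := YoungDiagram.card
  grade_strictMono _ _ h := card_lt_card (cells_ssubset_iff.mpr h)
  covBy_grade _ _ h := Nat.covBy_iff_add_one_eq.mpr (card_add_one_of_covBy h)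
  isMin_grade a ha := by
    rw [isMin_iff_eq_bot.mp ha]
    exact isMin_bot

lemma cells_subset_square {μ : YoungDiagram} {n : ℕ} (h : μ.card ≤ n) :
    μ.cells ⊆ range n ×ˢ range n := by
  rintro ⟨i, j⟩ hc
  have hi : i < μ.colLen j := mem_iff_lt_colLen.mp hc
  have hj : j < μ.rowLen i := mem_iff_lt_rowLen.mp hc
  have hcol : μ.colLen j ≤ μ.card := μ.colLen_eq_card ▸ card_filter_le _ _
  have hrow : μ.rowLen i ≤ μ.card := μ.rowLen_eq_card ▸ card_filter_le _ _
  simp only [mem_product, mem_range]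
  omega

lemma cells_injective : Function.Injective YoungDiagram.cells :=
  fun _ _ h => YoungDiagram.ext h

lemma finite_Iic (P : YoungDiagram) : (Set.Iic P).Finite :=
  (P.cells.powerset.finite_toSet.preimage cells_injective.injOn).subset
    fun _ hm => mem_powerset.mpr (cells_subset_iff.mpr hm)

noncomputable instance : LocallyFiniteOrderBot YoungDiagram :=
  LocallyFiniteOrderBot.ofIic _ (fun P => (finite_Iic P).toFinset) fun _ _ => by simp

lemma finite_setOf_card_eq (n : ℕ) : {x : YoungDiagram | x.card = n}.Finite :=
  (((range n ×ˢ range n).powerset.finite_toSet).preimage cells_injective.injOn).subset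
    fun _ hx => mem_powerset.mpr (cells_subset_square (le_of_eq hx))

end YoungDiagram

noncomputable def sytWeight (μ : YoungDiagram → ℝ) (s t : ℝ) (P : YoungDiagram) : ℝ :=
  μ P * (fSYT P : ℝ) ^ t / (P.card.factorial : ℝ) ^ s

lemma sytWeight_nonneg {μ : YoungDiagram → ℝ} (hμ0 : ∀ x, 0 ≤ μ x) (s t : ℝ)
    (P : YoungDiagram) : 0 ≤ sytWeight μ s t P := by
  unfold sytWeight
  have := hμ0 P
  positivity

lemma sytWeight_eq (μ : YoungDiagram → ℝ) (s t : ℝ) (P : YoungDiagram) :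
    sytWeight μ s t P =
      μ P * (((fSYT P : ℝ) / P.card.factorial) ^ t * (P.card.factorial : ℝ) ^ (t - s)) := by
  have hF : (0 : ℝ) < P.card.factorial := by positivity
  rw [sytWeight, Real.div_rpow (Nat.cast_nonneg _) hF.le, Real.rpow_sub hF]
  field_simp

lemma isLogSupermodular_sytWeight {μ : YoungDiagram → ℝ} {s t : ℝ} (hs : 0 ≤ s) (hst : s ≤ t)
    (hμ0 : ∀ x, 0 ≤ μ x) (hμ : IsLogSupermodular μ) : IsLogSupermodular (sytWeight μ s t) := by
  -- `fSYT = Nat.card ∘ CoverChainTo` and `grade ℕ = YoungDiagram.card` definitionally.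
  have hR : IsLogSupermodular fun P : YoungDiagram => (fSYT P : ℝ) / P.card.factorial :=
    isLogSupermodular_card_coverChainTo_div_factorial YoungDiagram.card_inf_add_card_sup
  have hF : IsLogSupermodular fun P : YoungDiagram => (P.card.factorial : ℝ) :=
    isLogSupermodular_grade_factorial YoungDiagram.card_inf_add_card_sup
  rw [show sytWeight μ s t = _ from funext (sytWeight_eq μ s t)]
  refine hμ.mul ((hR.rpow (fun _ => by positivity) (hs.trans hst)).mul
    (hF.rpow (fun _ => by positivity) (sub_nonneg.mpr hst)) (fun _ => by positivity)
    (fun _ => by positivity)) hμ0 fun _ => by positivity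

lemma add_le_add_of_mul_le_mul {X Y M W : ℝ} (hX : 0 ≤ X) (hW : 0 ≤ W)
    (hXM : X ≤ M) (hYM : Y ≤ M) (h : X * Y ≤ M * W) : X + Y ≤ M + W := by
  rcases (hX.trans hXM).eq_or_lt with hM | hM
  · linarith [hM ▸ hXM, hM ▸ hYM]
  · refine le_of_mul_le_mul_left ?_ hM
    nlinarith [mul_nonneg (sub_nonneg.mpr hXM) (sub_nonneg.mpr hYM)]

section GradedFourFunctions

variable {ι : Type*}

def pairsWithCardSum (E : Finset ι) (n : ℕ) : Finset (Finset ι × Finset ι) :=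
  (E.powerset ×ˢ E.powerset).filter fun p => p.1.card + p.2.card = n

noncomputable def powersetSeries (E : Finset ι) (f : Finset ι → ℝ) : PowerSeries ℝ :=
  PowerSeries.mk fun n => ∑ A ∈ E.powersetCard n, f A

lemma coeff_powersetSeries_mul (E : Finset ι) (α β : Finset ι → ℝ) (n : ℕ) :
    PowerSeries.coeff n (powersetSeries E α * powersetSeries E β) =
      ∑ p ∈ pairsWithCardSum E n, α p.1 * β p.2 := by
  rw [PowerSeries.coeff_mul, ← sum_fiberwise_of_maps_to (s := pairsWithCardSum E n)
    (f := fun p => α p.1 * β p.2) (g := fun p => (p.1.card, p.2.card))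
    (t := antidiagonal n) fun p hp => mem_antidiagonal.mpr (mem_filter.mp hp).2]
  refine sum_congr rfl fun ab hab => ?_
  simp only [powersetSeries, PowerSeries.coeff_mk]
  rw [sum_mul_sum, ← sum_product']
  refine sum_congr ?_ fun _ _ => rfl
  ext ⟨A, B⟩
  have := mem_antidiagonal.mp hab
  simp only [pairsWithCardSum, mem_product, mem_powersetCard, mem_filter, mem_powerset]
  grind

variable [DecidableEq ι]

lemma sum_powerset_sdiff_comm (c : Finset ι) (f : Finset ι → Finset ι → ℝ) :
    ∑ u ∈ c.powerset, f u (c \ u) = ∑ u ∈ c.powerset, f (c \ u) u :=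
  sum_nbij' (c \ ·) (c \ ·) (fun _ _ => mem_powerset.mpr sdiff_subset)
    (fun _ _ => mem_powerset.mpr sdiff_subset)
    (fun _ hu => Finset.sdiff_sdiff_eq_self (mem_powerset.mp hu))
    (fun _ hu => Finset.sdiff_sdiff_eq_self (mem_powerset.mp hu))
    fun _ hu => by rw [Finset.sdiff_sdiff_eq_self (mem_powerset.mp hu)]

lemma sum_powerset_insert_mul_sdiff {z : ι} {c : Finset ι} (hz : z ∉ c)
    (α β : Finset ι → ℝ) :
    ∑ u ∈ (insert z c).powerset, α u * β (insert z c \ u) =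
      ∑ u ∈ c.powerset, α (insert z u) * β (c \ u) +
        ∑ u ∈ c.powerset, α u * β (insert z (c \ u)) := by
  rw [sum_powerset_insert hz, add_comm]
  congr 1 <;> refine sum_congr rfl fun u hu => ?_
  · rw [insert_sdiff_insert, sdiff_insert_of_notMem hz]
  · rw [insert_sdiff_of_notMem _ fun h => hz (mem_powerset.mp hu h)]

/-- The four functions theorem applied on `c.powerset` to the functions
`u ↦ α (insert z u) * β (c \ u)` and `v ↦ α (c \ v) * β (insert z v)`. -/
lemma sum_insert_mul_sum_insert_le {z : ι} {c : Finset ι} {α β γ δ : Finset ι → ℝ}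
    (hα : ∀ A, 0 ≤ α A) (hβ : ∀ A, 0 ≤ β A) (hγ : ∀ A, 0 ≤ γ A) (hδ : ∀ A, 0 ≤ δ A)
    (h : ∀ u v, u ⊆ insert z c → v ⊆ insert z c → α u * β v ≤ γ (u ∪ v) * δ (u ∩ v)) :
    (∑ u ∈ c.powerset, α (insert z u) * β (c \ u)) *
        ∑ u ∈ c.powerset, α u * β (insert z (c \ u)) ≤
      (∑ u ∈ c.powerset, γ (insert z u) * δ (c \ u)) *
        ∑ u ∈ c.powerset, γ u * δ (insert z (c \ u)) := by
  rw [sum_powerset_sdiff_comm c fun u v => α u * β (insert z v),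
    sum_powerset_sdiff_comm c fun u v => γ u * δ (insert z v)]
  have key := Finset.four_functions_theorem (𝒜 := c.powerset) (ℬ := c.powerset) c
    (f₁ := fun u => α (insert z u) * β (c \ u)) (f₂ := fun v => α (c \ v) * β (insert z v))
    (f₃ := fun v => γ (c \ v) * δ (insert z v)) (f₄ := fun u => γ (insert z u) * δ (c \ u))
    (fun _ => mul_nonneg (hα _) (hβ _)) (fun _ => mul_nonneg (hα _) (hβ _))
    (fun _ => mul_nonneg (hγ _) (hδ _)) (fun _ => mul_nonneg (hγ _) (hδ _))
    (fun s hs t ht => ?_) subset_rfl subset_rfl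
  · rw [powerset_infs_powerset_self, powerset_sups_powerset_self] at key
    exact key.trans_eq (mul_comm _ _)
  · have h₁ := h (insert z s) (insert z t) (insert_subset_insert z hs) (insert_subset_insert z ht)
    have h₂ := h (c \ t) (c \ s) (sdiff_subset.trans (subset_insert z c))
      (sdiff_subset.trans (subset_insert z c))
    rw [← insert_union_distrib, ← insert_inter_distrib] at h₁
    rw [← sdiff_inter_distrib_right, ← sdiff_union_distrib, inter_comm t, union_comm t] at h₂
    calc α (insert z s) * β (c \ s) * (α (c \ t) * β (insert z t))
        = (α (insert z s) * β (insert z t)) * (α (c \ t) * β (c \ s)) := by ring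
      _ ≤ (γ (insert z (s ∪ t)) * δ (insert z (s ∩ t))) *
            (γ (c \ (s ∩ t)) * δ (c \ (s ∪ t))) :=
        mul_le_mul h₁ h₂ (mul_nonneg (hα _) (hβ _)) (mul_nonneg (hγ _) (hδ _))
      _ = γ (c \ (s ∩ t)) * δ (insert z (s ∩ t)) * (γ (insert z (s ∪ t)) * δ (c \ (s ∪ t))) := by
        ring

/-- The case `A ∩ B = ∅`, `A ∪ B = c` of the graded four functions theorem. -/
theorem sum_powerset_mul_sdiff_le (c : Finset ι) {α β γ δ : Finset ι → ℝ}
    (hα : ∀ A, 0 ≤ α A) (hβ : ∀ A, 0 ≤ β A) (hγ : ∀ A, 0 ≤ γ A) (hδ : ∀ A, 0 ≤ δ A)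
    (h : ∀ u v, u ⊆ c → v ⊆ c → α u * β v ≤ γ (u ∪ v) * δ (u ∩ v)) :
    ∑ u ∈ c.powerset, α u * β (c \ u) ≤ ∑ u ∈ c.powerset, γ u * δ (c \ u) := by
  induction c using Finset.induction_on generalizing α β γ δ with
  | empty => simpa using h ∅ ∅ subset_rfl subset_rfl
  | insert z c hz ih =>
    rw [sum_powerset_insert_mul_sdiff hz, sum_powerset_insert_mul_sdiff hz]
    have hXM := ih (α := (α <| insert z ·)) (γ := (γ <| insert z ·)) (fun _ => hα _) hβ
      (fun _ => hγ _) hδ fun u v hu hv => by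
        simpa only [insert_union, insert_inter_of_notMem fun h => hz (hv h)] using
          h (insert z u) v (insert_subset_insert z hu) (hv.trans (subset_insert z c))
    have hYM := ih (β := (β <| insert z ·)) (γ := (γ <| insert z ·)) hα (fun _ => hβ _)
      (fun _ => hγ _) hδ fun u v hu hv => by
        simpa only [union_insert, inter_insert_of_notMem fun h => hz (hu h)] using
          h u (insert z v) (hu.trans (subset_insert z c)) (insert_subset_insert z hv)
    exact add_le_add_of_mul_le_mul (sum_nonneg fun _ _ => mul_nonneg (hα _) (hβ _))
      (sum_nonneg fun _ _ => mul_nonneg (hγ _) (hδ _)) hXM hYM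
      (sum_insert_mul_sum_insert_le hα hβ hγ hδ h)

/-- Reindexing `(A, B) ↦ ((A ∩ B, A ∆ B), A \ B)`. -/
lemma sum_pairsWithCardSum_eq_sum_sigma (E : Finset ι) (n : ℕ)
    (F : Finset ι → Finset ι → ℝ) :
    ∑ p ∈ pairsWithCardSum E n, F p.1 p.2 =
      ∑ x ∈ ((E.powerset ×ˢ E.powerset).filter fun q =>
          Disjoint q.1 q.2 ∧ 2 * q.1.card + q.2.card = n).sigma (fun q => q.2.powerset),
        F (x.1.1 ∪ x.2) (x.1.1 ∪ (x.1.2 \ x.2)) := by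
  refine (sum_nbij' (fun x : (_ : Finset ι × Finset ι) × Finset ι =>
      (x.1.1 ∪ x.2, x.1.1 ∪ (x.1.2 \ x.2)))
    (fun p => ⟨(p.1 ∩ p.2, (p.1 ∪ p.2) \ (p.1 ∩ p.2)), p.1 \ p.2⟩) ?_ ?_ ?_ ?_
    fun _ _ => rfl).symm
  · rintro ⟨⟨i, c⟩, u⟩ hx
    simp only [mem_sigma, mem_filter, mem_product, mem_powerset] at hx
    obtain ⟨⟨⟨hiE, hcE⟩, hdisj, hcard⟩, huc⟩ := hx
    simp only [pairsWithCardSum, mem_filter, mem_product, mem_powerset]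
    refine ⟨⟨union_subset hiE (huc.trans hcE), union_subset hiE (sdiff_subset.trans hcE)⟩, ?_⟩
    rw [card_union_of_disjoint (hdisj.mono_right huc),
      card_union_of_disjoint (hdisj.mono_right sdiff_subset), card_sdiff_of_subset huc]
    have := card_le_card huc
    omega
  · rintro ⟨A, B⟩ hp
    simp only [pairsWithCardSum, mem_filter, mem_product, mem_powerset] at hp
    obtain ⟨⟨hA, hB⟩, hcard⟩ := hp
    simp only [mem_sigma, mem_filter, mem_product, mem_powerset]
    refine ⟨⟨⟨inter_subset_left.trans hA, sdiff_subset.trans (union_subset hA hB)⟩,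
      disjoint_sdiff, ?_⟩, fun x hx => ?_⟩
    · rw [card_sdiff_of_subset inter_subset_union]
      have := card_union_add_card_inter A B
      have := card_le_card (inter_subset_union (s := A) (t := B))
      omega
    · simp only [Finset.mem_sdiff, mem_union, mem_inter] at hx ⊢
      tauto
  · rintro ⟨⟨i, c⟩, u⟩ hx
    simp only [mem_sigma, mem_filter, mem_product, mem_powerset] at hx
    obtain ⟨⟨-, hdisj, -⟩, huc⟩ := hx
    have hic := disjoint_left.mp hdisj
    have hu : ∀ y ∈ u, y ∈ c := fun y hy => huc hy
    ext y <;> simp only [mem_inter, mem_union, Finset.mem_sdiff] <;> grind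
  · rintro ⟨A, B⟩ -
    ext y <;> simp only [mem_inter, mem_union, Finset.mem_sdiff] <;> tauto

theorem coeff_powersetSeries_mul_le (E : Finset ι) {α β γ δ : Finset ι → ℝ}
    (hα : ∀ A, 0 ≤ α A) (hβ : ∀ A, 0 ≤ β A) (hγ : ∀ A, 0 ≤ γ A) (hδ : ∀ A, 0 ≤ δ A)
    (h : ∀ u v, u ⊆ E → v ⊆ E → α u * β v ≤ γ (u ∪ v) * δ (u ∩ v)) (n : ℕ) :
    PowerSeries.coeff n (powersetSeries E α * powersetSeries E β) ≤
      PowerSeries.coeff n (powersetSeries E γ * powersetSeries E δ) := by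
  rw [coeff_powersetSeries_mul, coeff_powersetSeries_mul,
    sum_pairsWithCardSum_eq_sum_sigma E n fun A B => α A * β B,
    sum_pairsWithCardSum_eq_sum_sigma E n fun A B => γ A * δ B, sum_sigma, sum_sigma]
  refine sum_le_sum fun ⟨i, c⟩ hq => ?_
  obtain ⟨⟨hi, hc⟩, -⟩ : (i ⊆ E ∧ c ⊆ E) ∧ _ := by simpa using hq
  exact sum_powerset_mul_sdiff_le c (fun _ => hα _) (fun _ => hβ _) (fun _ => hγ _)
    (fun _ => hδ _) fun u v hu hv => by
      simpa only [← union_union_distrib_left, ← union_inter_distrib_left] using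
        h (i ∪ u) (i ∪ v) (union_subset hi (hu.trans hc)) (union_subset hi (hv.trans hc))

end GradedFourFunctions

namespace YoungDiagram

noncomputable def rankSeries (f : YoungDiagram → ℝ) : PowerSeries ℝ :=
  PowerSeries.mk fun n => ∑ᶠ x : {m : YoungDiagram // m.card = n}, f x

noncomputable def extendCells (f : YoungDiagram → ℝ) (A : Finset (ℕ × ℕ)) : ℝ :=
  if h : IsLowerSet (A : Set (ℕ × ℕ)) then f ⟨A, h⟩ else 0

lemma extendCells_cells (f : YoungDiagram → ℝ) (x : YoungDiagram) :
    extendCells f x.cells = f x :=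
  dif_pos x.isLowerSet

lemma extendCells_nonneg {f : YoungDiagram → ℝ} (hf : ∀ x, 0 ≤ f x) (A : Finset (ℕ × ℕ)) :
    0 ≤ extendCells f A := by
  unfold extendCells
  split_ifs
  exacts [hf _, le_rfl]

lemma extendCells_mul_le {α β γ δ : YoungDiagram → ℝ} (hγ : ∀ x, 0 ≤ γ x)
    (hδ : ∀ x, 0 ≤ δ x) (h : ∀ x y, α x * β y ≤ γ (x ⊔ y) * δ (x ⊓ y))
    (u v : Finset (ℕ × ℕ)) :
    extendCells α u * extendCells β v ≤ extendCells γ (u ∪ v) * extendCells δ (u ∩ v) := by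
  have hrhs := mul_nonneg (extendCells_nonneg hγ (u ∪ v)) (extendCells_nonneg hδ (u ∩ v))
  by_cases hu : IsLowerSet (u : Set (ℕ × ℕ))
  · by_cases hv : IsLowerSet (v : Set (ℕ × ℕ))
    · obtain ⟨x, rfl⟩ : ∃ x : YoungDiagram, x.cells = u := ⟨⟨u, hu⟩, rfl⟩
      obtain ⟨y, rfl⟩ : ∃ y : YoungDiagram, y.cells = v := ⟨⟨v, hv⟩, rfl⟩
      rw [← cells_sup, ← cells_inf]
      simpa only [extendCells_cells] using h x y
    · rwa [show extendCells β v = 0 from dif_neg hv, mul_zero]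
  · rwa [show extendCells α u = 0 from dif_neg hu, zero_mul]

lemma coeff_rankSeries_eq_coeff_powersetSeries {n N : ℕ} (hn : n ≤ N) (f : YoungDiagram → ℝ) :
    PowerSeries.coeff n (rankSeries f) =
      PowerSeries.coeff n (powersetSeries (range N ×ˢ range N) (extendCells f)) := by
  have hfin : ∑ᶠ x : {m : YoungDiagram // m.card = n}, f x =
      ∑ x ∈ (finite_setOf_card_eq n).toFinset, f x :=
    (finsum_set_coe_eq_finsum_mem {m : YoungDiagram | m.card = n}).trans
      (finsum_mem_eq_finite_toFinset_sum f (finite_setOf_card_eq n))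
  rw [rankSeries, powersetSeries, PowerSeries.coeff_mk, PowerSeries.coeff_mk, hfin]
  simp_rw [← extendCells_cells f]
  rw [← sum_image fun x _ y _ h => cells_injective h]
  refine sum_subset (fun A hA => ?_) fun A hA hA' => ?_
  · obtain ⟨x, hx, rfl⟩ := mem_image.mp hA
    have hx : x.card = n := by simpa using hx
    exact mem_powersetCard.mpr ⟨cells_subset_square (hx.trans_le hn), hx⟩
  · rw [extendCells, dif_neg fun hlow => hA' (mem_image.mpr ⟨⟨A, hlow⟩, ?_, rfl⟩)]
    simpa using (mem_powersetCard.mp hA).2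

theorem coeff_rankSeries_mul_le {α β γ δ : YoungDiagram → ℝ}
    (hα : ∀ x, 0 ≤ α x) (hβ : ∀ x, 0 ≤ β x) (hγ : ∀ x, 0 ≤ γ x) (hδ : ∀ x, 0 ≤ δ x)
    (h : ∀ x y, α x * β y ≤ γ (x ⊔ y) * δ (x ⊓ y)) (n : ℕ) :
    PowerSeries.coeff n (rankSeries α * rankSeries β) ≤
      PowerSeries.coeff n (rankSeries γ * rankSeries δ) := by
  have hmul : ∀ f g : YoungDiagram → ℝ, PowerSeries.coeff n (rankSeries f * rankSeries g) =
      PowerSeries.coeff n (powersetSeries (range n ×ˢ range n) (extendCells f) *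
        powersetSeries (range n ×ˢ range n) (extendCells g)) := fun f g => by
    simp only [PowerSeries.coeff_mul]
    refine sum_congr rfl fun p hp => ?_
    rw [coeff_rankSeries_eq_coeff_powersetSeries (HasAntidiagonal.antidiagonal.fst_le hp),
      coeff_rankSeries_eq_coeff_powersetSeries (HasAntidiagonal.antidiagonal.snd_le hp)]
  rw [hmul, hmul]
  exact coeff_powersetSeries_mul_le _ (extendCells_nonneg hα) (extendCells_nonneg hβ)
    (extendCells_nonneg hγ) (extendCells_nonneg hδ)
    (fun u v _ _ => extendCells_mul_le hγ hδ h u v) n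

end YoungDiagram

lemma Fser_eq_rankSeries (μ : YoungDiagram → ℝ) (s t : ℝ) (k : YoungDiagram → ℝ) :
    Fser μ s t k = YoungDiagram.rankSeries fun P => k P * sytWeight μ s t P := by
  ext n
  simp only [Fser, YoungDiagram.rankSeries, PowerSeries.coeff_mk]
  refine finsum_congr fun lam => ?_
  rw [sytWeight, lam.2, mul_div_assoc, mul_div_assoc, mul_assoc]

/-- q-FKG on Young's lattice: for log-supermodular `μ`, increasing nonnegative
`g, h`, and `0 ≤ s ≤ t`, every coefficient of
`F(1;z)·F(gh;z) − F(g;z)·F(h;z)` is nonnegative. -/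
theorem stmt_13 (s t : ℝ) (hs : 0 ≤ s) (hst : s ≤ t)
    (μ g h : YoungDiagram → ℝ)
    (hμ0 : ∀ x, 0 ≤ μ x) (hg0 : ∀ x, 0 ≤ g x) (hh0 : ∀ x, 0 ≤ h x)
    (hμ : ∀ x y : YoungDiagram, μ x * μ y ≤ μ (x ⊓ y) * μ (x ⊔ y))
    (hg : Monotone g) (hh : Monotone h) :
    ∀ n : ℕ,
      (PowerSeries.coeff (R := ℝ) n) (Fser μ s t g * Fser μ s t h) ≤
      (PowerSeries.coeff (R := ℝ) n) (Fser μ s t 1 * Fser μ s t (fun x => g x * h x)) := by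
  intro n
  have hw0 := sytWeight_nonneg hμ0 s t
  have hw := isLogSupermodular_sytWeight hs hst hμ0 hμ
  simp only [Fser_eq_rankSeries, Pi.one_apply, one_mul]
  rw [mul_comm (YoungDiagram.rankSeries (sytWeight μ s t))]
  exact YoungDiagram.coeff_rankSeries_mul_le (fun x => mul_nonneg (hg0 x) (hw0 x))
    (fun x => mul_nonneg (hh0 x) (hw0 x))
    (fun x => mul_nonneg (mul_nonneg (hg0 x) (hh0 x)) (hw0 x)) hw0
    (hw.mul_le_of_monotone hw0 hg hh hg0 hh0) n
end

section
/- Let L be a finite Boolean lattice (isomorphic to the lattice of subsets of a finite set), μ: L → ℝ>0 log-supermodular, and g, h: L → ℝ≥0 increasing. For each x, let x^c denote its complement. Then Σ_{x ≤ a^c} [g(x) − g(x^c)] μ(x)μ(x^c) ≤ 0, where a is any atom of L and the sum runs over the interval [0̂, a^c]. -/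
/-- The key inequality `α ≤ 0` in the inductive proof of the q-FKG inequality:
in the Boolean lattice of subsets of a finite set `S`, for a strictly positive
log-supermodular `μ`, an increasing nonnegative `g`, and an atom `{a}`,
`Σ_{x ⊆ {a}ᶜ} [g(x) − g(xᶜ)] μ(x)μ(xᶜ) ≤ 0`. -/
theorem stmt_18 {S : Type*} [Fintype S] [DecidableEq S]
    (μ g : Finset S → ℝ)
    (hμpos : ∀ x, 0 < μ x) (hg0 : ∀ x, 0 ≤ g x)
    (hμ : ∀ x y : Finset S, μ x * μ y ≤ μ (x ⊓ y) * μ (x ⊔ y))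
    (hg : Monotone g) (a : S) :
    ∑ x ∈ ({a}ᶜ : Finset S).powerset, (g x - g xᶜ) * (μ x * μ xᶜ) ≤ 0 := by
  classical
  set ν : Finset S → ℝ := fun x => μ x * μ xᶜ with hνdef
  set h : Finset S → ℝ := fun x => if a ∈ x then 1 else 0 with hhdef
  have hν0 : ∀ x, 0 < ν x := fun x => mul_pos (hμpos x) (hμpos xᶜ)
  have hνc : ∀ x : Finset S, ν xᶜ = ν x := by
    intro x; simp only [hνdef, compl_compl]; ring
  have hνsm : ∀ x y, ν x * ν y ≤ ν (x ⊓ y) * ν (x ⊔ y) := by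
    intro x y
    have h1 := hμ x y
    have h2 := hμ xᶜ yᶜ
    rw [← compl_sup, ← compl_inf] at h2
    calc ν x * ν y = (μ x * μ y) * (μ xᶜ * μ yᶜ) := by simp only [hνdef]; ring
      _ ≤ (μ (x ⊓ y) * μ (x ⊔ y)) * (μ (x ⊔ y)ᶜ * μ (x ⊓ y)ᶜ) :=
          mul_le_mul h1 h2 (mul_pos (hμpos _) (hμpos _)).le
            (mul_pos (hμpos _) (hμpos _)).le
      _ = ν (x ⊓ y) * ν (x ⊔ y) := by simp only [hνdef]; ring
  have hh0 : ∀ x, 0 ≤ h x := by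
    intro x; simp only [hhdef]; split <;> norm_num
  have hhmono : Monotone h := by
    intro x y hxy
    simp only [hhdef]
    by_cases hx : a ∈ x
    · simp [hx, hxy hx]
    · simp only [hx, if_false]; split <;> norm_num
  -- complement bijection on sums
  have key : ∀ F : Finset S → ℝ, ∑ x : Finset S, F xᶜ = ∑ x : Finset S, F x := by
    intro F
    exact Fintype.sum_bijective compl compl_bijective _ _ (fun x => rfl)
  have hhc : ∀ x : Finset S, h xᶜ = 1 - h x := by
    intro x; simp only [hhdef, Finset.mem_compl]; by_cases hx : a ∈ x <;> simp [hx]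
  -- Sν = 2 * Sh
  have hSν : ∑ x : Finset S, ν x = 2 * ∑ x : Finset S, ν x * h x := by
    have := key (fun x => ν x * h x)
    simp only [hνc, hhc] at this
    have expand : ∑ x : Finset S, ν x * (1 - h x)
        = ∑ x : Finset S, ν x - ∑ x : Finset S, ν x * h x := by
      rw [← Finset.sum_sub_distrib]; congr 1; ext x; ring
    rw [expand] at this
    linarith
  -- Sh > 0
  have hSh : 0 < ∑ x : Finset S, ν x * h x := by
    apply Finset.sum_pos' (fun x _ => mul_nonneg (hν0 x).le (hh0 x))
    refine ⟨(Finset.univ : Finset S), Finset.mem_univ _, ?_⟩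
    have : h Finset.univ = 1 := by simp [hhdef]
    rw [this, mul_one]; exact hν0 _
  -- FKG
  have hfkg := fkg g h ν (by intro x; exact (hν0 x).le) (by intro x; exact hg0 x)
    (by intro x; exact hh0 x) hg hhmono hνsm
  rw [hSν] at hfkg
  have hmain : ∑ x : Finset S, ν x * g x ≤ 2 * ∑ x : Finset S, ν x * (g x * h x) := by
    have h2 : (∑ x : Finset S, ν x * g x) * (∑ x : Finset S, ν x * h x)
        ≤ (2 * ∑ x : Finset S, ν x * (g x * h x)) * (∑ x : Finset S, ν x * h x) := by
      calc (∑ x : Finset S, ν x * g x) * (∑ x : Finset S, ν x * h x)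
          ≤ (2 * ∑ x : Finset S, ν x * h x) * ∑ x : Finset S, ν x * (g x * h x) := hfkg
        _ = (2 * ∑ x : Finset S, ν x * (g x * h x)) * (∑ x : Finset S, ν x * h x) := by ring
    exact le_of_mul_le_mul_right h2 hSh
  -- rewrite the goal sum
  have hpow : ({a}ᶜ : Finset S).powerset
      = Finset.univ.filter (fun x : Finset S => a ∉ x) := by
    ext x
    simp only [Finset.mem_powerset, Finset.mem_filter, Finset.mem_univ, true_and,
      Finset.subset_iff, Finset.mem_compl, Finset.mem_singleton]
    constructor
    · intro hsub hax; exact hsub hax rfl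
    · intro hax b hb hba; exact hax (hba ▸ hb)
  rw [hpow, Finset.sum_filter]
  have split : ∀ x : Finset S, (if a ∉ x then (g x - g xᶜ) * (μ x * μ xᶜ) else 0)
      = (ν x * g x - ν x * (g x * h x)) - (if a ∉ x then g xᶜ * ν x else 0) := by
    intro x
    by_cases hx : a ∈ x <;> simp [hhdef, hx, hνdef] <;> ring
  simp only [split]
  rw [Finset.sum_sub_distrib, Finset.sum_sub_distrib]
  have hsecond : ∑ x : Finset S, (if a ∉ x then g xᶜ * ν x else 0)
      = ∑ x : Finset S, ν x * (g x * h x) := by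
    have := key (fun x => if a ∉ x then g xᶜ * ν x else 0)
    rw [← this]
    congr 1; ext x
    simp only [compl_compl, Finset.mem_compl, hνc, hhdef]
    by_cases hx : a ∈ x <;> simp [hx] <;> ring
  rw [hsecond]
  linarith
end
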